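/- arXiv:2104.04898 — 3 statements merged into one kernel-verified Lean document; each statement's English description precedes it below -/
import Mathlib

section
/- Let G be a 4-connected planar triangulation with n vertices, and let t be a positive integer. Then either there exist two distinct vertices v, x of G with more than t common neighbors, or G has an independent set S of vertices of degree at most 6 such that no 4-cycle of G contains two vertices of S and |S| ≥ n/(108t). -/
open SimpleGraph Set

variable {V : Type*}

/-- An independent set of vertices. -/
def IndepSet (G : SimpleGraph V) (S : Set V) : Prop :=
  ∀ a ∈ S, ∀ b ∈ S, a ≠ b → ¬ G.Adj a b

/-- Three distinct mutually adjacent vertices, i.e. a triangle (3-cycle). -/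
def IsTriangle (G : SimpleGraph V) (a b c : V) : Prop :=
  a ≠ b ∧ a ≠ c ∧ b ≠ c ∧ G.Adj a b ∧ G.Adj b c ∧ G.Adj a c

/-- The four listed vertices form a 4-cycle `a b c d a`. -/
def IsCycle4 (G : SimpleGraph V) (a b c d : V) : Prop :=
  ([a, b, c, d] : List V).Nodup ∧ G.Adj a b ∧ G.Adj b c ∧ G.Adj c d ∧ G.Adj d a

/-- The five listed vertices form a 5-cycle `a b c d e a`. -/
def IsCycle5 (G : SimpleGraph V) (a b c d e : V) : Prop :=
  ([a, b, c, d, e] : List V).Nodup ∧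
    G.Adj a b ∧ G.Adj b c ∧ G.Adj c d ∧ G.Adj d e ∧ G.Adj e a

/-- Deleting the vertex set `s` disconnects `G`. -/
def IsSeparating (G : SimpleGraph V) (s : Set V) : Prop :=
  ∃ a b : ↥(sᶜ), ¬ (G.induce sᶜ).Reachable a b

/-- `G` is 4-connected: more than 4 vertices, and removing any at most 3 vertices
leaves a connected graph. -/
def FourConnected (G : SimpleGraph V) [Fintype V] : Prop :=
  4 < Fintype.card V ∧ ∀ s : Set V, s.ncard ≤ 3 → (G.induce sᶜ).Connected

/-- `G` is 2-connected: more than 2 vertices, and removing any single vertex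
leaves a connected graph. -/
def TwoConnected (G : SimpleGraph V) [Fintype V] : Prop :=
  2 < Fintype.card V ∧ ∀ s : Set V, s.ncard ≤ 1 → (G.induce sᶜ).Connected

/-- `f` is the edge set of a triangle of `G`. -/
def IsTriangleFace [DecidableEq V] (G : SimpleGraph V) (f : Finset (Sym2 V)) : Prop :=
  ∃ a b c : V, IsTriangle G a b c ∧ f = {s(a, b), s(b, c), s(a, c)}

/-- A combinatorial plane triangulation structure on `G`: a connected graph together with a
set of triangular faces such that every edge lies on exactly two faces and Euler's formula
holds.  This encodes a plane graph in which every face (including the outer one) is bounded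
by a triangle. -/
structure PlaneTriangulation [Fintype V] [DecidableEq V] (G : SimpleGraph V) where
  connected : G.Connected
  faces : Set (Finset (Sym2 V))
  face_tri : ∀ f ∈ faces, IsTriangleFace G f
  edge_faces : ∀ e ∈ G.edgeSet, {f ∈ faces | e ∈ f}.ncard = 2
  euler : (Fintype.card V : ℤ) - (G.edgeSet.ncard : ℤ) + (faces.ncard : ℤ) = 2

/-- `f` is the edge set of a cycle of `G`. -/
def IsCycleFace [DecidableEq V] (G : SimpleGraph V) (f : Finset (Sym2 V)) : Prop :=
  ∃ (v : V) (c : G.Walk v v), c.IsCycle ∧ f = c.edges.toFinset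

/-- A combinatorial plane graph structure on a 2-connected graph `G`: all faces are bounded
by cycles, every edge lies on exactly two faces, and Euler's formula holds. -/
structure PlaneGraph [Fintype V] [DecidableEq V] (G : SimpleGraph V) where
  connected : G.Connected
  faces : Set (Finset (Sym2 V))
  face_cyc : ∀ f ∈ faces, IsCycleFace G f
  edge_faces : ∀ e ∈ G.edgeSet, {f ∈ faces | e ∈ f}.ncard = 2
  euler : (Fintype.card V : ℤ) - (G.edgeSet.ncard : ℤ) + (faces.ncard : ℤ) = 2

/-- `K` is the vertex set of a connected component of `G - S`. -/
def IsCompOf (G : SimpleGraph V) (S K : Set V) : Prop :=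
  K.Nonempty ∧ Disjoint K S ∧ (G.induce K).Connected ∧
    ∀ a ∈ K, ∀ b : V, b ∉ S → G.Adj a b → b ∈ K

/-- The attachments on `S` of the bridge with component `K`. -/
def Attachments (G : SimpleGraph V) (S K : Set V) : Set V :=
  {v ∈ S | ∃ w ∈ K, G.Adj v w}

/-- `p` is a `C`-Tutte path: a path such that every `p`-bridge has at most 3 attachments,
and every `p`-bridge containing an edge of `C` has at most 2 attachments.  (Bridges that are
single edges always have exactly two attachments, so only bridges arising from components
of `G - V(p)` are constrained.) -/
def IsTuttePath (G : SimpleGraph V) (C : Set (Sym2 V)) {x y : V} (p : G.Walk x y) : Prop :=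
  p.IsPath ∧
    ∀ K : Set V, IsCompOf G {v | v ∈ p.support} K →
      (Attachments G {v | v ∈ p.support} K).ncard ≤ 3 ∧
      ((∃ e ∈ C, ∃ a ∈ K, a ∈ e) → (Attachments G {v | v ∈ p.support} K).ncard ≤ 2)

/-- A combinatorial near triangulation with outer 4-cycle `u v w x u`: every face other than
the outer one is a triangle. -/
structure NearTriangulationC4 [Fintype V] [DecidableEq V]
    (G : SimpleGraph V) (u v w x : V) where
  nodup : ([u, v, w, x] : List V).Nodup
  connected : G.Connected
  huv : G.Adj u v
  hvw : G.Adj v w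
  hwx : G.Adj w x
  hxu : G.Adj x u
  faces : Set (Finset (Sym2 V))
  outer_mem : ({s(u, v), s(v, w), s(w, x), s(x, u)} : Finset (Sym2 V)) ∈ faces
  face_tri : ∀ f ∈ faces,
    f ≠ ({s(u, v), s(v, w), s(w, x), s(x, u)} : Finset (Sym2 V)) → IsTriangleFace G f
  edge_faces : ∀ e ∈ G.edgeSet, {f ∈ faces | e ∈ f}.ncard = 2
  euler : (Fintype.card V : ℤ) - (G.edgeSet.ncard : ℤ) + (faces.ncard : ℤ) = 2

/-- A Hamiltonian path: a path visiting every vertex. -/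
def IsHamPath {W : Type*} (H : SimpleGraph W) {a b : W} (p : H.Walk a b) : Prop :=
  p.IsPath ∧ ∀ z : W, z ∈ p.support

/-- A graph is outer planar iff its vertices can be placed (injectively) on a line/circle so
that no two edges cross. -/
def OuterPlanar {W : Type*} (H : SimpleGraph W) : Prop :=
  ∃ f : W → ℝ, Function.Injective f ∧
    ∀ a b c d : W, H.Adj a b → H.Adj c d → ¬ (f a < f c ∧ f c < f b ∧ f b < f d)

/-- A diamond-6-cycle in `G` on the nine listed vertices: three diamonds (`K₄` minus an edge)
glued in a cyclic fashion at the vertices `k₁ k₂ k₃`.  Its crucial vertices (the degree-3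
vertices) are `a₁ b₁ a₂ b₂ a₃ b₃`. -/
def IsDiamond6 (G : SimpleGraph V) (k₁ k₂ k₃ a₁ b₁ a₂ b₂ a₃ b₃ : V) : Prop :=
  ([k₁, k₂, k₃, a₁, b₁, a₂, b₂, a₃, b₃] : List V).Nodup ∧
  G.Adj a₁ b₁ ∧ G.Adj a₁ k₁ ∧ G.Adj a₁ k₂ ∧ G.Adj b₁ k₁ ∧ G.Adj b₁ k₂ ∧
  G.Adj a₂ b₂ ∧ G.Adj a₂ k₂ ∧ G.Adj a₂ k₃ ∧ G.Adj b₂ k₂ ∧ G.Adj b₂ k₃ ∧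
  G.Adj a₃ b₃ ∧ G.Adj a₃ k₃ ∧ G.Adj a₃ k₁ ∧ G.Adj b₃ k₃ ∧ G.Adj b₃ k₁

/-- `v` lies on a separating 4-cycle of `G`. -/
def OnSep4Cycle (G : SimpleGraph V) (v : V) : Prop :=
  ∃ a b c d : V, IsCycle4 G a b c d ∧ IsSeparating G {a, b, c, d} ∧
    v ∈ ({a, b, c, d} : Set V)

/-- A diamond-4-cycle in `G`: a 4-cycle `a b c d a` together with a vertex `e` adjacent to
`a`, `b` and `d`.  Its crucial vertices are `a` and `e` (the two degree-3 vertices not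
adjacent to the degree-2 vertex `c`). -/
structure Diamond4 (G : SimpleGraph V) where
  a : V
  b : V
  c : V
  d : V
  e : V
  nodup : ([a, b, c, d, e] : List V).Nodup
  hab : G.Adj a b
  hbc : G.Adj b c
  hcd : G.Adj c d
  hda : G.Adj d a
  hea : G.Adj e a
  heb : G.Adj e b
  hed : G.Adj e d

/-- The vertex set of a diamond-4-cycle. -/
def Diamond4.verts [DecidableEq V] {G : SimpleGraph V} (D : Diamond4 G) : Finset V :=
  {D.a, D.b, D.c, D.d, D.e}

/-- The edge set of a diamond-4-cycle. -/
def Diamond4.edges [DecidableEq V] {G : SimpleGraph V} (D : Diamond4 G) : Finset (Sym2 V) :=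
  {s(D.a, D.b), s(D.b, D.c), s(D.c, D.d), s(D.d, D.a), s(D.e, D.a), s(D.e, D.b), s(D.e, D.d)}

/-- The crucial vertices of a diamond-4-cycle. -/
def Diamond4.crucial {G : SimpleGraph V} (D : Diamond4 G) : Set V := {D.a, D.e}

/-- `b` induces a subgraph of `G` that is 2-connected or a single edge. -/
def TwoConnSet (G : SimpleGraph V) (b : Set V) : Prop :=
  2 ≤ b.ncard ∧ (G.induce b).Connected ∧
    (b.ncard = 2 ∨ ∀ c ∈ b, (G.induce (b \ {c})).Connected)

/-- `b` is (the vertex set of) a block of the subgraph of `G` induced by `T`. -/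
def IsBlockIn (G : SimpleGraph V) (T b : Set V) : Prop :=
  b ⊆ T ∧ TwoConnSet G b ∧ ∀ b' : Set V, b ⊂ b' → b' ⊆ T → ¬ TwoConnSet G b'

/-- The children of `v` in the tree `T` rooted at `r`. -/
def RootedChildren (T : SimpleGraph V) (r v : V) : Set V :=
  {w | T.Adj v w ∧ T.dist r w = T.dist r v + 1}

/-- `v` is a leaf of the tree `T` rooted at `r` (it has no children). -/
def RootedLeaf (T : SimpleGraph V) (r v : V) : Prop :=
  RootedChildren T r v = ∅

/-!
By Euler's formula a plane triangulation on `n` vertices has `3n - 6` edges, so its degree sum is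
below `6n` and at least `n / 7` vertices have degree at most 6. Call two distinct vertices in
conflict when they are adjacent or have two common neighbours, i.e. are adjacent or opposite on a
4-cycle. If no two vertices have more than `t` common neighbours, a vertex of degree `d ≤ 6`
conflicts with at most `d + C(d, 2) (t - 1) ≤ 6 + 15 (t - 1)` others, so a greedy choice among the
low-degree vertices gives a conflict-free set of size at least `n / (7 (7 + 15 (t - 1)))`, which
is at least `n / (108 t)`.
-/

open scoped Finset

namespace IsTriangleFace

variable [DecidableEq V] {G : SimpleGraph V} {f : Finset (Sym2 V)}

lemma card_eq_three (h : IsTriangleFace G f) : f.card = 3 := by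
  obtain ⟨a, b, c, ⟨hab, hac, hbc, -⟩, rfl⟩ := h
  rw [Finset.card_eq_three]
  exact ⟨_, _, _, by simp [hab, hac, hbc], by simp [hac, hbc, hab.symm], by simp [hbc, hab.symm],
    rfl⟩

lemma subset_edgeSet (h : IsTriangleFace G f) : ↑f ⊆ G.edgeSet := by
  obtain ⟨a, b, c, ⟨-, -, -, hab, hbc, hac⟩, rfl⟩ := h
  simp [Set.insert_subset_iff, hab, hbc, hac]

end IsTriangleFace

namespace PlaneTriangulation

variable [Fintype V] [DecidableEq V] {G : SimpleGraph V} [DecidableRel G.Adj]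

lemma three_mul_ncard_faces (T : PlaneTriangulation G) :
    3 * T.faces.ncard = 2 * #G.edgeFinset := by
  obtain ⟨F, hF⟩ : ∃ F : Finset (Finset (Sym2 V)), ↑F = T.faces := ⟨_, (toFinite _).coe_toFinset⟩
  rw [← hF, ncard_coe_finset, mul_comm, mul_comm 2]
  refine Finset.card_mul_eq_card_mul (fun f e => e ∈ f) (fun f hf => ?_) (fun e he => ?_)
  · have hT := T.face_tri f (hF ▸ hf)
    rw [← hT.card_eq_three, Finset.bipartiteAbove]
    congr 1
    ext e
    simpa using fun he => hT.subset_edgeSet he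
  · rw [← T.edge_faces e (mem_edgeFinset.mp he), Finset.bipartiteBelow, ← ncard_coe_finset, ← hF]
    simp

lemma card_edgeFinset_add_six (T : PlaneTriangulation G) :
    #G.edgeFinset + 6 = 3 * Fintype.card V := by
  have h := T.euler
  have hF := T.three_mul_ncard_faces
  rw [← coe_edgeFinset, ncard_coe_finset] at h
  omega

lemma sum_degrees_add_twelve (T : PlaneTriangulation G) :
    ∑ v, G.degree v + 12 = 6 * Fintype.card V := by
  have := T.card_edgeFinset_add_six
  rw [sum_degrees_eq_twice_card_edges]
  omega

end PlaneTriangulation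

namespace SimpleGraph

lemma card_le_mul_card_degree_le [Fintype V] (G : SimpleGraph V) [DecidableRel G.Adj] {k : ℕ}
    (h : ∑ v, G.degree v ≤ k * Fintype.card V) :
    Fintype.card V ≤ (k + 1) * #{v | G.degree v ≤ k} := by
  have hsplit :=
    Finset.card_filter_add_card_filter_not (s := Finset.univ) (fun v => G.degree v ≤ k)
  have hhigh : (k + 1) * #{v | ¬G.degree v ≤ k} ≤ ∑ v, G.degree v :=
    calc (k + 1) * #{v | ¬G.degree v ≤ k} = ∑ v ∈ {v | ¬G.degree v ≤ k}, (k + 1) := by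
          rw [Finset.sum_const, smul_eq_mul, mul_comm]
      _ ≤ ∑ v ∈ {v | ¬G.degree v ≤ k}, G.degree v :=
          Finset.sum_le_sum fun v hv => by simpa using hv
      _ ≤ ∑ v, G.degree v := Finset.sum_le_sum_of_subset (Finset.subset_univ _)
  rw [Finset.card_univ] at hsplit
  nlinarith

theorem exists_isIndepSet_subset_card_le_mul [Fintype V] [DecidableEq V] (H : SimpleGraph V)
    [DecidableRel H.Adj] {k : ℕ} (P : Finset V) (hk : ∀ v ∈ P, H.degree v + 1 ≤ k) :
    ∃ S ⊆ P, H.IsIndepSet S ∧ #P ≤ k * #S := by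
  induction P using Finset.strongInduction with
  | H P ih =>
  obtain rfl | ⟨v, hv⟩ := P.eq_empty_or_nonempty
  · exact ⟨∅, subset_rfl, by simp, by simp⟩
  set P' := P \ insert v (H.neighborFinset v)
  have hP' : P' ⊂ P := (Finset.ssubset_iff_of_subset Finset.sdiff_subset).2 ⟨v, hv, by simp⟩
  obtain ⟨S, hSP', hS, hcard⟩ := ih P' hP' fun u hu => hk u (Finset.sdiff_subset hu)
  have hvS : ∀ u ∈ S, u ≠ v ∧ ¬H.Adj v u := fun u hu => by
    simpa [P', not_or] using (Finset.mem_sdiff.mp (hSP' hu)).2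
  refine ⟨insert v S, Finset.insert_subset hv (hSP'.trans Finset.sdiff_subset), ?_, ?_⟩
  · rw [Finset.coe_insert, isIndepSet_iff, Set.pairwise_insert]
    exact ⟨hS, fun u hu _ => ⟨(hvS u hu).2, fun h => (hvS u hu).2 h.symm⟩⟩
  · have hvS' : v ∉ S := fun h => (hvS v h).1 rfl
    calc #P ≤ #P' + #(insert v (H.neighborFinset v)) := Finset.card_le_card_sdiff_add_card
      _ ≤ k * #S + k := by
          gcongr
          exact (Finset.card_insert_le _ _).trans (by simpa using hk v hv)
      _ = k * #(insert v S) := by rw [Finset.card_insert_of_notMem hvS']; ring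

variable {G : SimpleGraph V}

lemma ncard_neighborSet_eq_degree [Fintype V] [DecidableRel G.Adj] (v : V) :
    (G.neighborSet v).ncard = G.degree v := by
  rw [← card_neighborFinset_eq_degree, ← ncard_coe_finset, coe_neighborFinset]

lemma ncard_commonNeighbors [Fintype V] [DecidableEq V] [DecidableRel G.Adj] (v w : V) :
    (G.commonNeighbors v w).ncard = #(G.neighborFinset v ∩ G.neighborFinset w) := by
  rw [← ncard_coe_finset, Finset.coe_inter, coe_neighborFinset, coe_neighborFinset,
    commonNeighbors_eq]

lemma two_le_ncard_commonNeighbors_of_cycle [Finite V] {a b c d : V} (hbd : b ≠ d)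
    (hab : G.Adj a b) (hbc : G.Adj b c) (hcd : G.Adj c d) (hda : G.Adj d a) :
    2 ≤ (G.commonNeighbors a c).ncard := by
  have hsub : {b, d} ⊆ G.commonNeighbors a c := by
    simp [Set.insert_subset_iff, mem_commonNeighbors, hab, hbc.symm, hda.symm, hcd]
  exact (ncard_pair hbd).symm.le.trans (ncard_le_ncard hsub)

def conflictGraph (G : SimpleGraph V) : SimpleGraph V where
  Adj u w := u ≠ w ∧ (G.Adj u w ∨ 2 ≤ (G.commonNeighbors u w).ncard)
  symm := ⟨fun _ _ ⟨hne, h⟩ => ⟨hne.symm, by rwa [G.adj_comm, commonNeighbors_symm]⟩⟩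
  loopless := ⟨fun _ h => h.1 rfl⟩

lemma conflictGraph_adj {u w : V} :
    G.conflictGraph.Adj u w ↔ u ≠ w ∧ (G.Adj u w ∨ 2 ≤ (G.commonNeighbors u w).ncard) :=
  Iff.rfl

lemma le_conflictGraph : G ≤ G.conflictGraph := fun _ _ h => ⟨h.ne, .inl h⟩

lemma degree_conflictGraph_le [Fintype V] [DecidableEq V] [DecidableRel G.Adj]
    [DecidableRel G.conflictGraph.Adj] {t : ℕ}
    (ht : ∀ x y, x ≠ y → (G.commonNeighbors x y).ncard ≤ t) (v : V) :
    G.conflictGraph.degree v ≤ G.degree v + (G.degree v).choose 2 * (t - 1) := by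
  -- a non-neighbour conflicting with `v` is a common neighbour, other than `v`, of two
  -- neighbours of `v`
  set C : Finset V → Finset V := fun p => ({u | p ⊆ G.neighborFinset u} : Finset V).erase v
  have hsub : G.conflictGraph.neighborFinset v ⊆
      G.neighborFinset v ∪ ((G.neighborFinset v).powersetCard 2).biUnion C := by
    intro u hu
    obtain ⟨hvu, hadj | htwo⟩ := conflictGraph_adj.1 ((mem_neighborFinset _ _ _).1 hu)
    · exact Finset.mem_union_left _ ((mem_neighborFinset _ _ _).2 hadj)
    rw [ncard_commonNeighbors] at htwo
    obtain ⟨p, hp, hp2⟩ := Finset.exists_subset_card_eq htwo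
    refine Finset.mem_union_right _ (Finset.mem_biUnion.2 ⟨p,
      Finset.mem_powersetCard.2 ⟨hp.trans Finset.inter_subset_left, hp2⟩, ?_⟩)
    have hpu : p ⊆ G.neighborFinset u := fun x hx => by
      simpa [adj_comm] using Finset.inter_subset_right (hp hx)
    simp [C, hvu.symm, hpu]
  have hC : ∀ p ∈ (G.neighborFinset v).powersetCard 2, #(C p) ≤ t - 1 := by
    intro p hp
    obtain ⟨hpv, hp2⟩ := Finset.mem_powersetCard.1 hp
    obtain ⟨x, y, hxy, rfl⟩ := Finset.card_eq_two.1 hp2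
    have hvC : v ∈ ({u | {x, y} ⊆ G.neighborFinset u} : Finset V) := by simpa using hpv
    have hxyC : ({u | {x, y} ⊆ G.neighborFinset u} : Finset V) ⊆
        G.neighborFinset x ∩ G.neighborFinset y := fun u => by
      simp [Finset.insert_subset_iff, adj_comm]
    have := (Finset.card_le_card hxyC).trans
      ((ncard_commonNeighbors x y).symm.trans_le (ht x y hxy))
    simp only [C, Finset.card_erase_of_mem hvC]
    omega
  calc G.conflictGraph.degree v = #(G.conflictGraph.neighborFinset v) :=
        (card_neighborFinset_eq_degree _ _).symm
    _ ≤ #(G.neighborFinset v) + #(((G.neighborFinset v).powersetCard 2).biUnion C) :=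
        (Finset.card_le_card hsub).trans (Finset.card_union_le _ _)
    _ ≤ G.degree v + (G.degree v).choose 2 * (t - 1) := by
        rw [card_neighborFinset_eq_degree]
        gcongr
        calc _ ≤ ∑ p ∈ (G.neighborFinset v).powersetCard 2, #(C p) := Finset.card_biUnion_le
          _ ≤ ∑ p ∈ (G.neighborFinset v).powersetCard 2, (t - 1) := Finset.sum_le_sum hC
          _ = (G.degree v).choose 2 * (t - 1) := by simp

end SimpleGraph

section Cycle4

variable [Finite V] {G : SimpleGraph V} {a b c d : V}

lemma IsCycle4.conflictGraph_adj_of_mem (h : IsCycle4 G a b c d) {u w : V}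
    (hu : u ∈ ({a, b, c, d} : Set V)) (hw : w ∈ ({a, b, c, d} : Set V)) (huw : u ≠ w) :
    G.conflictGraph.Adj u w := by
  obtain ⟨hnd, hab, hbc, hcd, hda⟩ := h
  simp only [List.nodup_cons, List.mem_cons, List.not_mem_nil, or_false,
    not_or, List.nodup_nil, and_true] at hnd
  obtain ⟨⟨-, hac, -⟩, ⟨-, hbd⟩, -⟩ := hnd
  have hac2 := two_le_ncard_commonNeighbors_of_cycle hbd hab hbc hcd hda
  have hbd2 := two_le_ncard_commonNeighbors_of_cycle (Ne.symm hac) hbc hcd hda hab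
  refine conflictGraph_adj.2 ⟨huw, ?_⟩
  simp only [Set.mem_insert_iff, Set.mem_singleton_iff] at hu hw
  rcases hu with rfl | rfl | rfl | rfl <;> rcases hw with rfl | rfl | rfl | rfl <;>
    simp_all [commonNeighbors_symm, adj_comm]

lemma IsCycle4.ncard_inter_le_one (h : IsCycle4 G a b c d) {S : Set V}
    (hS : G.conflictGraph.IsIndepSet S) : (({a, b, c, d} : Set V) ∩ S).ncard ≤ 1 :=
  (ncard_le_one (toFinite _)).2 fun _ hu _ hw =>
    by_contra fun huw => hS hu.2 hw.2 huw (h.conflictGraph_adj_of_mem hu.1 hw.1 huw)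

end Cycle4

theorem fourConnected_triangulation_common_nbrs_or_indep_general
    [Fintype V] [DecidableEq V] (G : SimpleGraph V) (n t : ℕ)
    (hn : Fintype.card V = n) (ht : 1 ≤ t)
    (hPT : Nonempty (PlaneTriangulation G)) :
    (∃ v x : V, v ≠ x ∧ t < (G.neighborSet v ∩ G.neighborSet x).ncard) ∨
    (∃ S : Set V, IndepSet G S ∧ (∀ v ∈ S, (G.neighborSet v).ncard ≤ 6) ∧
      (∀ a b c d : V, IsCycle4 G a b c d → (({a, b, c, d} : Set V) ∩ S).ncard ≤ 1) ∧
      n ≤ 108 * t * S.ncard) := by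
  classical
  refine or_iff_not_imp_left.2 fun hcommon => ?_
  push Not at hcommon
  set P : Finset V := {v | G.degree v ≤ 6}
  have hnP : n ≤ 7 * #P :=
    hn ▸ G.card_le_mul_card_degree_le (by have := hPT.some.sum_degrees_add_twelve; omega)
  have hconflict : ∀ v ∈ P, G.conflictGraph.degree v + 1 ≤ 7 + 15 * (t - 1) := fun v hv => by
    have hv6 : G.degree v ≤ 6 := (Finset.mem_filter.1 hv).2
    have hchoose : (G.degree v).choose 2 ≤ 15 := Nat.choose_le_choose 2 hv6
    have := G.degree_conflictGraph_le hcommon v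
    nlinarith
  obtain ⟨S, hSP, hS, hPS⟩ := G.conflictGraph.exists_isIndepSet_subset_card_le_mul P hconflict
  refine ⟨S, fun a ha b hb hab hadj => hS ha hb hab (le_conflictGraph hadj), fun v hv => ?_,
    fun a b c d h => h.ncard_inter_le_one hS, ?_⟩
  · rw [ncard_neighborSet_eq_degree]
    exact (Finset.mem_filter.1 (hSP hv)).2
  · rw [ncard_coe_finset]
    calc n ≤ 7 * ((7 + 15 * (t - 1)) * #S) := hnP.trans (by gcongr)
      _ ≤ 108 * t * #S := by
        rw [← mul_assoc]
        exact Nat.mul_le_mul_right _ (by omega)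

/-- In a 4-connected planar triangulation with `n` vertices, for any positive integer `t`,
either two distinct vertices have more than `t` common neighbors, or there is an
independent set `S` of vertices of degree at most 6, no 4-cycle containing two vertices of
`S`, with `|S| ≥ n / (108 t)`. -/
theorem fourConnected_triangulation_common_nbrs_or_indep
    [Fintype V] [DecidableEq V] (G : SimpleGraph V) (n t : ℕ)
    (hn : Fintype.card V = n) (ht : 1 ≤ t)
    (hPT : Nonempty (PlaneTriangulation G)) (h4 : FourConnected G) :
    (∃ v x : V, v ≠ x ∧ t < (G.neighborSet v ∩ G.neighborSet x).ncard) ∨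
    (∃ S : Set V, IndepSet G S ∧ (∀ v ∈ S, (G.neighborSet v).ncard ≤ 6) ∧
      (∀ a b c d : V, IsCycle4 G a b c d → (({a, b, c, d} : Set V) ∩ S).ncard ≤ 1) ∧
      n ≤ 108 * t * S.ncard) :=
  fourConnected_triangulation_common_nbrs_or_indep_general G n t hn ht hPT
end

section
/- Let G be a 4-connected planar triangulation and let S be an independent set of vertices of degree at most 6 in G such that S saturates no 4-cycle and no 5-cycle of G. Then for any separating 4-cycle C of G, the number of vertices of S on C plus the number of vertices of S off C with at least 3 neighbors on C is at most 1. -/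
open SimpleGraph Set

variable {V : Type*}

/-! Every configuration excluded here produces a 4-cycle whose two opposite vertices lie in the
independent set `S`, so that `S` saturates it. Two vertices of `S` on `C` are non-adjacent,
hence opposite on `C`. If `x ∈ S` lies on `C` and `v ∈ S` lies off `C` with three neighbours on
`C`, then `v` misses only `x` and so sees both `C`-neighbours of `x`: replacing the vertex
opposite `x` by `v` gives the 4-cycle. Two vertices off `C` seeing three of its four vertices
share two neighbours `x ≠ y` on `C`, and `v x w y` is the 4-cycle. -/

namespace Set

variable {α : Type*} {s t u : Set α}

theorem sdiff_subsingleton_of_ncard_le (hs : s.Finite) (h : s.ncard ≤ (s ∩ t).ncard + 1) :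
    (s \ t).Subsingleton := by
  have hsplit := ncard_inter_add_ncard_sdiff_eq_ncard s t hs
  exact fun x hx y hy => (ncard_le_one hs.sdiff).1 (by omega) x hx y hy

theorem one_lt_ncard_inter_inter (hs : s.Finite)
    (h : s.ncard + 2 ≤ (s ∩ t).ncard + (s ∩ u).ncard) : 1 < (s ∩ t ∩ u).ncard := by
  have hincl := ncard_inter_add_ncard_union (s ∩ t) (s ∩ u) (hs.inter_of_left t)
    (hs.inter_of_left u)
  have hunion : (s ∩ t ∪ s ∩ u).ncard ≤ s.ncard :=
    ncard_le_ncard (union_subset inter_subset_left inter_subset_left) hs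
  have hinter : s ∩ t ∩ (s ∩ u) = s ∩ t ∩ u := by
    ext; simp only [mem_inter_iff]; tauto
  rw [hinter] at hincl
  omega

theorem ncard_insert_insert_insert_singleton_le (a b c d : α) :
    ({a, b, c, d} : Set α).ncard ≤ 4 :=
  (ncard_insert_le _ _).trans <| Nat.succ_le_succ <| (ncard_insert_le _ _).trans <|
    Nat.succ_le_succ <| (ncard_insert_le _ _).trans <| by rw [ncard_singleton]

end Set

namespace IsCycle4

variable {G : SimpleGraph V} {a b c d : V}

theorem of_adj (hac : a ≠ c) (hbd : b ≠ d) (hab : G.Adj a b) (hbc : G.Adj b c)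
    (hcd : G.Adj c d) (hda : G.Adj d a) : IsCycle4 G a b c d := by
  refine ⟨?_, hab, hbc, hcd, hda⟩
  simp [hab.ne, hac, hda.ne', hbc.ne, hbd, hcd.ne]

theorem ne_opposite (h : IsCycle4 G a b c d) : a ≠ c := by
  have hnd := h.1
  simp only [List.nodup_cons, List.mem_cons] at hnd
  tauto

theorem rotate (h : IsCycle4 G a b c d) : IsCycle4 G b c d a := by
  obtain ⟨hnd, hab, hbc, hcd, hda⟩ := h
  exact ⟨(List.rotate_perm [a, b, c, d] 1).nodup_iff.2 hnd, hbc, hcd, hda, hab⟩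

theorem exists_start (h : IsCycle4 G a b c d) {x : V} (hx : x ∈ ({a, b, c, d} : Set V)) :
    ∃ q r t, IsCycle4 G x q r t ∧ ({x, q, r, t} : Set V) = {a, b, c, d} := by
  rcases hx with rfl | rfl | rfl | rfl
  · exact ⟨_, _, _, h, rfl⟩
  · exact ⟨_, _, _, h.rotate, by ext; simp only [mem_insert_iff, mem_singleton_iff]; tauto⟩
  · exact ⟨_, _, _, h.rotate.rotate,
      by ext; simp only [mem_insert_iff, mem_singleton_iff]; tauto⟩
  · exact ⟨_, _, _, h.rotate.rotate.rotate,
      by ext; simp only [mem_insert_iff, mem_singleton_iff]; tauto⟩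

end IsCycle4

section Saturation

variable {G : SimpleGraph V} {a b c d : V} {S : Set V} (hInd : IndepSet G S)
  (hsat4 : ∀ a b c d : V, IsCycle4 G a b c d → (({a, b, c, d} : Set V) ∩ S).ncard ≠ 2)
include hInd hsat4

theorem IsCycle4.notMem_of_mem_opposite (h : IsCycle4 G a b c d) (ha : a ∈ S) : c ∉ S := by
  intro hc
  have hb : b ∉ S := fun hb => hInd a ha b hb h.2.1.ne h.2.1
  have hd : d ∉ S := fun hd => hInd d hd a ha h.2.2.2.2.ne h.2.2.2.2
  refine hsat4 a b c d h ?_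
  have hinter : ({a, b, c, d} : Set V) ∩ S = {a, c} := by
    ext x
    simp only [mem_inter_iff, mem_insert_iff, mem_singleton_iff]
    constructor
    · rintro ⟨rfl | rfl | rfl | rfl, hx⟩ <;> tauto
    · rintro (rfl | rfl) <;> tauto
  rw [hinter, ncard_pair h.ne_opposite]

theorem IsCycle4.eq_of_mem_of_start_mem (h : IsCycle4 G a b c d) (ha : a ∈ S) {y : V}
    (hy : y ∈ ({a, b, c, d} : Set V) ∩ S) : y = a := by
  obtain ⟨rfl | rfl | rfl | rfl, hyS⟩ := hy
  · rfl
  · exact absurd h.2.1 (hInd _ ha _ hyS h.2.1.ne)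
  · exact absurd hyS (h.notMem_of_mem_opposite hInd hsat4 ha)
  · exact absurd h.2.2.2.2 (hInd _ hyS _ ha h.2.2.2.2.ne)

theorem IsCycle4.inter_subsingleton (h : IsCycle4 G a b c d) :
    (({a, b, c, d} : Set V) ∩ S).Subsingleton := by
  rintro x ⟨hxC, hxS⟩ y hy
  obtain ⟨q, r, t, hx, hxC⟩ := h.exists_start hxC
  rw [← hxC] at hy
  exact (hx.eq_of_mem_of_start_mem hInd hsat4 hxS hy).symm

theorem IsCycle4.not_adj_or_not_adj_of_mem (h : IsCycle4 G a b c d) (ha : a ∈ S) {v : V}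
    (hv : v ∈ S) (hva : v ≠ a) : ¬ G.Adj v b ∨ ¬ G.Adj v d := by
  by_contra! hadj
  have hcyc : IsCycle4 G a b v d := of_adj hva.symm h.rotate.ne_opposite
    h.2.1 hadj.1.symm hadj.2 h.2.2.2.2
  exact hcyc.notMem_of_mem_opposite hInd hsat4 ha hv

theorem IsCycle4.ncard_inter_neighborSet_lt_three (h : IsCycle4 G a b c d) {x v : V}
    (hx : x ∈ ({a, b, c, d} : Set V) ∩ S) (hv : v ∈ S) (hvC : v ∉ ({a, b, c, d} : Set V)) :
    (({a, b, c, d} : Set V) ∩ G.neighborSet v).ncard < 3 := by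
  by_contra! h3
  obtain ⟨q, r, t, hx', hC⟩ := h.exists_start hx.1
  rw [← hC] at h3 hvC
  have hvx : v ≠ x := fun e => hvC (e ▸ mem_insert _ _)
  have hmiss := sdiff_subsingleton_of_ncard_le (t := G.neighborSet v) (toFinite _)
    ((ncard_insert_insert_insert_singleton_le x q r t).trans (by omega))
  have hxmiss : x ∈ ({x, q, r, t} : Set V) \ G.neighborSet v :=
    ⟨mem_insert _ _, hInd v hv x hx.2 hvx⟩
  rcases hx'.not_adj_or_not_adj_of_mem hInd hsat4 hx.2 hv hvx with hq | ht
  · exact hx'.2.1.ne (hmiss hxmiss ⟨by simp, hq⟩)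
  · exact hx'.2.2.2.2.ne (hmiss ⟨by simp, ht⟩ hxmiss)

theorem eq_of_three_le_ncard_inter_neighborSet {v w : V} (hv : v ∈ S) (hw : w ∈ S)
    (hv3 : 3 ≤ (({a, b, c, d} : Set V) ∩ G.neighborSet v).ncard)
    (hw3 : 3 ≤ (({a, b, c, d} : Set V) ∩ G.neighborSet w).ncard) : v = w := by
  by_contra hvw
  have hC4 := ncard_insert_insert_insert_singleton_le a b c d
  obtain ⟨x, y, hx, hy, hxy⟩ :=
    (one_lt_ncard_iff (toFinite _)).1 <| one_lt_ncard_inter_inter (s := {a, b, c, d})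
      (t := G.neighborSet v) (u := G.neighborSet w) (toFinite _) (by omega)
  exact (IsCycle4.of_adj hvw hxy hx.1.2 hx.2.symm hy.2 hy.1.2.symm).notMem_of_mem_opposite
    hInd hsat4 hv hw

end Saturation

theorem sep4cycle_few_special_vertices_general
    (G : SimpleGraph V)
    (S : Set V) (hInd : IndepSet G S)
    (hsat4 : ∀ a b c d : V, IsCycle4 G a b c d →
      (({a, b, c, d} : Set V) ∩ S).ncard ≠ 2) :
    ∀ a b c d : V, IsCycle4 G a b c d → IsSeparating G {a, b, c, d} →
      (({a, b, c, d} : Set V) ∩ S).ncard +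
        {v ∈ S | v ∉ ({a, b, c, d} : Set V) ∧
          3 ≤ (({a, b, c, d} : Set V) ∩ G.neighborSet v).ncard}.ncard ≤ 1 := by
  intro a b c d hC _
  set T := {v ∈ S | v ∉ ({a, b, c, d} : Set V) ∧
    3 ≤ (({a, b, c, d} : Set V) ∩ G.neighborSet v).ncard}
  have hT : T.Subsingleton := fun v hv w hw =>
    eq_of_three_le_ncard_inter_neighborSet hInd hsat4 hv.1 hw.1 hv.2.2 hw.2.2
  have hexcl : ∀ x ∈ ({a, b, c, d} : Set V) ∩ S, ∀ v ∈ T, False := fun x hx v hv =>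
    (hC.ncard_inter_neighborSet_lt_three hInd hsat4 hx hv.1 hv.2.1).not_ge hv.2.2
  have hunion : (({a, b, c, d} : Set V) ∩ S ∪ T).Subsingleton := by
    rintro x (hx | hx) y (hy | hy)
    · exact hC.inter_subsingleton hInd hsat4 hx hy
    · exact (hexcl x hx y hy).elim
    · exact (hexcl y hy x hx).elim
    · exact hT hx hy
  have hdisj : Disjoint (({a, b, c, d} : Set V) ∩ S) T :=
    disjoint_left.2 fun x hx hxT => hxT.2.1 hx.1
  calc _ = (({a, b, c, d} : Set V) ∩ S ∪ T).ncard :=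
        (ncard_union_eq hdisj (toFinite _) hT.finite).symm
    _ ≤ 1 := (ncard_le_one hunion.finite).2 hunion

/-- Let `G` be a 4-connected planar triangulation and `S` an independent set of vertices of
degree at most 6 saturating no 4-cycle and no 5-cycle.  Then for every separating 4-cycle
`C` of `G`, the number of vertices of `S` on `C` plus the number of vertices of `S` off `C`
with at least 3 neighbors on `C` is at most 1. -/
theorem sep4cycle_few_special_vertices
    [Fintype V] [DecidableEq V] (G : SimpleGraph V)
    (hPT : Nonempty (PlaneTriangulation G)) (h4 : FourConnected G)
    (S : Set V) (hInd : IndepSet G S)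
    (hdeg : ∀ v ∈ S, (G.neighborSet v).ncard ≤ 6)
    (hsat4 : ∀ a b c d : V, IsCycle4 G a b c d →
      (({a, b, c, d} : Set V) ∩ S).ncard ≠ 2)
    (hsat5 : ∀ a b c d e : V, IsCycle5 G a b c d e →
      (({a, b, c, d, e} : Set V) ∩ S).ncard ≠ 2) :
    ∀ a b c d : V, IsCycle4 G a b c d → IsSeparating G {a, b, c, d} →
      (({a, b, c, d} : Set V) ∩ S).ncard +
        {v ∈ S | v ∉ ({a, b, c, d} : Set V) ∧
          3 ≤ (({a, b, c, d} : Set V) ∩ G.neighborSet v).ncard}.ncard ≤ 1 :=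
  sep4cycle_few_special_vertices_general G S hInd hsat4
end

section
/- Let G be a 4-connected planar triangulation with n ≥ 6 vertices, and suppose vertices u_1, …, u_6 and v, x are such that v u_i x are paths for all i, u_i u_{i+1} ∈ E(G) for 1 ≤ i ≤ 5, and each u_i (1 ≤ i ≤ 6) has degree exactly 4 with neighborhood {u_{i−1}, u_{i+1}, v, x} (indices shifted appropriately). Then the graph G* obtained from G by contracting the edge u_3u_4 to a single vertex is again a 4-connected planar triangulation with n − 1 vertices. -/
open SimpleGraph Set

variable {V : Type*}

section ContractionHelpers

private lemma reach_map' {α β : Type*} {H : SimpleGraph α} {H' : SimpleGraph β} (φ : α → β)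
    (hadj : ∀ a b, H.Adj a b → H'.Adj (φ a) (φ b) ∨ φ a = φ b) {a b : α}
    (h : H.Reachable a b) : H'.Reachable (φ a) (φ b) := by
  obtain ⟨p⟩ := h
  induction p with
  | nil => exact SimpleGraph.Reachable.refl _
  | cons h p ih =>
      rcases hadj _ _ h with h' | h'
      · exact (h'.reachable).trans ih
      · exact h' ▸ ih

private lemma conn_map' {α β : Type*} {H : SimpleGraph α} {H' : SimpleGraph β} (φ : α → β)
    (hsurj : Function.Surjective φ)
    (hadj : ∀ a b, H.Adj a b → H'.Adj (φ a) (φ b) ∨ φ a = φ b)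
    (h : H.Connected) : H'.Connected := by
  rw [SimpleGraph.connected_iff]
  refine ⟨?_, ?_⟩
  · intro b1 b2
    obtain ⟨a1, rfl⟩ := hsurj b1
    obtain ⟨a2, rfl⟩ := hsurj b2
    exact reach_map' φ hadj (h.preconnected a1 a2)
  · obtain ⟨a⟩ := h.nonempty
    exact ⟨φ a⟩

private lemma del_connected' {α : Type*} (H : SimpleGraph α) (D : Set α)
    (hconn : (H.induce Dᶜ).Connected) (c z : α) (hz : z ∈ (insert c D)ᶜ)
    (hnbr : ∀ y (hy : y ∈ (insert c D)ᶜ), H.Adj c y →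
        (H.induce (insert c D)ᶜ).Reachable ⟨y, hy⟩ ⟨z, hz⟩) :
    (H.induce (insert c D)ᶜ).Connected := by
  have hzD : z ∈ Dᶜ := fun h => hz (Set.mem_insert_iff.mpr (Or.inr h))
  have key : ∀ (a' b' : ↥Dᶜ) (p : (H.induce Dᶜ).Walk a' b'),
      ∀ (ha : a'.val ∈ (insert c D)ᶜ), b' = ⟨z, hzD⟩ →
      (H.induce (insert c D)ᶜ).Reachable ⟨a'.val, ha⟩ ⟨z, hz⟩ := by
    intro a' b' p
    induction p with
    | nil =>
        intro ha hb
        cases hb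
        exact SimpleGraph.Reachable.refl _
    | @cons a' m b' h p ih =>
        intro ha hb
        by_cases hmc : m.val = c
        · have : H.Adj a'.val c := hmc ▸ (SimpleGraph.comap_adj.mp h)
          exact hnbr a'.val ha this.symm
        · have hm : m.val ∈ (insert c D)ᶜ := by
            intro hmem
            rcases Set.mem_insert_iff.mp hmem with h1 | h2
            · exact hmc h1
            · exact m.prop h2
          have step : (H.induce (insert c D)ᶜ).Adj ⟨a'.val, ha⟩ ⟨m.val, hm⟩ :=
            SimpleGraph.comap_adj.mpr (SimpleGraph.comap_adj.mp h)
          exact step.reachable.trans (ih hm hb)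
  rw [SimpleGraph.connected_iff]
  constructor
  · rintro ⟨a, ha⟩ ⟨b, hb⟩
    have haD : a ∈ Dᶜ := fun h => ha (Set.mem_insert_iff.mpr (Or.inr h))
    have hbD : b ∈ Dᶜ := fun h => hb (Set.mem_insert_iff.mpr (Or.inr h))
    obtain ⟨p⟩ := hconn.preconnected ⟨a, haD⟩ ⟨z, hzD⟩
    obtain ⟨q⟩ := hconn.preconnected ⟨b, hbD⟩ ⟨z, hzD⟩
    exact (key _ _ p ha rfl).trans (key _ _ q hb rfl).symm
  · exact ⟨⟨z, hz⟩⟩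

private lemma tri_mem' {α : Type*} [DecidableEq α] {a b c : α} (hab : a ≠ b) (hac : a ≠ c)
    (hbc : b ≠ c) (e : Sym2 α) :
    e ∈ ({s(a,b), s(b,c), s(a,c)} : Finset (Sym2 α)) ↔
      ∃ y ∈ ({a,b,c} : Finset α), ∃ z ∈ ({a,b,c} : Finset α), y ≠ z ∧ e = s(y,z) := by
  simp only [Finset.mem_insert, Finset.mem_singleton]
  constructor
  · rintro (rfl | rfl | rfl)
    · exact ⟨a, Or.inl rfl, b, Or.inr (Or.inl rfl), hab, rfl⟩
    · exact ⟨b, Or.inr (Or.inl rfl), c, Or.inr (Or.inr rfl), hbc, rfl⟩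
    · exact ⟨a, Or.inl rfl, c, Or.inr (Or.inr rfl), hac, rfl⟩
  · rintro ⟨y, hy, z, hz, hyz, rfl⟩
    rcases hy with rfl|rfl|rfl <;> rcases hz with rfl|rfl|rfl <;>
      first
        | exact (hyz rfl).elim
        | exact Or.inl rfl
        | exact Or.inl Sym2.eq_swap
        | exact Or.inr (Or.inl rfl)
        | exact Or.inr (Or.inl Sym2.eq_swap)
        | exact Or.inr (Or.inr rfl)
        | exact Or.inr (Or.inr Sym2.eq_swap)

private lemma tri_vert' {α : Type*} [DecidableEq α] {a b c : α} (zz : α) :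
    zz ∈ ({a,b,c} : Finset α) ↔
      ∃ e ∈ ({s(a,b), s(b,c), s(a,c)} : Finset (Sym2 α)), zz ∈ e := by
  simp only [Finset.mem_insert, Finset.mem_singleton]
  constructor
  · rintro (rfl|rfl|rfl)
    · exact ⟨s(zz,b), Or.inl rfl, by simp⟩
    · exact ⟨s(zz,c), Or.inr (Or.inl rfl), by simp⟩
    · exact ⟨s(a,zz), Or.inr (Or.inr rfl), by simp⟩
  · rintro ⟨e, (rfl|rfl|rfl), hz⟩ <;> rcases Sym2.mem_iff.mp hz with rfl|rfl <;> simp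

private lemma tri_eq' {α : Type*} [DecidableEq α] {a b c p q r : α} (hab : a ≠ b) (hac : a ≠ c)
    (hbc : b ≠ c) (hpq : p ≠ q) (hpr : p ≠ r) (hqr : q ≠ r)
    (h : ({a,b,c} : Finset α) = {p,q,r}) :
    ({s(a,b), s(b,c), s(a,c)} : Finset (Sym2 α)) = {s(p,q), s(q,r), s(p,r)} := by
  ext e
  rw [tri_mem' hab hac hbc, tri_mem' hpq hpr hqr, h]

private lemma adj_tri' {α : Type*} {H : SimpleGraph α} {a b c : α} (h1 : H.Adj a b)
    (h2 : H.Adj b c) (h3 : H.Adj a c) {p q : α} (hp : p = a ∨ p = b ∨ p = c)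
    (hq : q = a ∨ q = b ∨ q = c) (hpq : p ≠ q) : H.Adj p q := by
  rcases hp with rfl|rfl|rfl <;> rcases hq with rfl|rfl|rfl <;>
    first
      | exact (hpq rfl).elim
      | exact h1 | exact h1.symm | exact h2 | exact h2.symm | exact h3 | exact h3.symm

private lemma sym2_rep' {α : Type*} (e : Sym2 α) : ∃ y z : α, e = s(y, z) := by
  induction e using Sym2.ind with
  | _ y z => exact ⟨y, z, rfl⟩

end ContractionHelpers

set_option maxHeartbeats 3000000 in
/-- Let `G` be a 4-connected planar triangulation with `n ≥ 6` vertices containing a fan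
`u₁, …, u₆` of consecutive degree-4 vertices over the non-adjacent pair `v, x` (with
surrounding vertices `u₀, u₇`): each `uᵢ` (1 ≤ i ≤ 6) lies on the path `v uᵢ x`, with
`uᵢ u_{i+1} ∈ E(G)` and `N(uᵢ) = {u_{i-1}, u_{i+1}, v, x}`.  Then the graph obtained from
`G` by contracting the edge `u₃u₄` (identifying `u₄` with `u₃`) is again a 4-connected
planar triangulation with `n - 1` vertices. -/
theorem contract_edge_fourConnected_triangulation
    [Fintype V] [DecidableEq V] (G : SimpleGraph V) (n : ℕ)
    (hn : Fintype.card V = n) (hn6 : 6 ≤ n)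
    (hPT : Nonempty (PlaneTriangulation G)) (h4 : FourConnected G)
    (v x : V) (u : Fin 8 → V) (hinj : Function.Injective u)
    (hvx : v ≠ x) (hnadj : ¬ G.Adj v x)
    (hv : ∀ i : Fin 8, v ≠ u i) (hx : ∀ i : Fin 8, x ≠ u i)
    (hpath : ∀ i : Fin 8, 1 ≤ (i : ℕ) → (i : ℕ) ≤ 6 → G.Adj v (u i) ∧ G.Adj (u i) x)
    (hchain : ∀ i : Fin 8, (h7 : (i : ℕ) < 7) → G.Adj (u i) (u ⟨(i : ℕ) + 1, by omega⟩))
    (hnbhd : ∀ i : Fin 8, (h1 : 1 ≤ (i : ℕ)) → (h6 : (i : ℕ) ≤ 6) →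
      G.neighborSet (u i) =
        {u ⟨(i : ℕ) - 1, by omega⟩, u ⟨(i : ℕ) + 1, by omega⟩, v, x}) :
    Nonempty (PlaneTriangulation (SimpleGraph.fromRel
      (fun p q : {a : V // a ≠ u 4} =>
        G.Adj p.val q.val ∨ (p.val = u 3 ∧ G.Adj (u 4) q.val)))) ∧
    FourConnected (SimpleGraph.fromRel
      (fun p q : {a : V // a ≠ u 4} =>
        G.Adj p.val q.val ∨ (p.val = u 3 ∧ G.Adj (u 4) q.val))) ∧
    Fintype.card {a : V // a ≠ u 4} = n - 1 := by
  classical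
  obtain ⟨PT⟩ := hPT
  have hd : ∀ (i j : Fin 8), i ≠ j → u i ≠ u j := fun i j h e => h (hinj e)
  have a23 : G.Adj (u 2) (u 3) := hchain 2 (by decide)
  have a34 : G.Adj (u 3) (u 4) := hchain 3 (by decide)
  have a45 : G.Adj (u 4) (u 5) := hchain 4 (by decide)
  have av : ∀ i : Fin 8, 1 ≤ (i : ℕ) → (i : ℕ) ≤ 6 → G.Adj v (u i) :=
    fun i h1 h6 => (hpath i h1 h6).1
  have ax : ∀ i : Fin 8, 1 ≤ (i : ℕ) → (i : ℕ) ≤ 6 → G.Adj (u i) x :=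
    fun i h1 h6 => (hpath i h1 h6).2
  have hN3 : ∀ z, G.Adj (u 3) z ↔ z = u 2 ∨ z = u 4 ∨ z = v ∨ z = x := by
    intro z
    have h2 : G.neighborSet (u 3) = {u 2, u 4, v, x} := hnbhd 3 (by decide) (by decide)
    rw [Set.ext_iff] at h2
    simpa [SimpleGraph.mem_neighborSet] using h2 z
  have hN4 : ∀ z, G.Adj (u 4) z ↔ z = u 3 ∨ z = u 5 ∨ z = v ∨ z = x := by
    intro z
    have h2 : G.neighborSet (u 4) = {u 3, u 5, v, x} := hnbhd 4 (by decide) (by decide)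
    rw [Set.ext_iff] at h2
    simpa [SimpleGraph.mem_neighborSet] using h2 z
  have h34ne : u 3 ≠ u 4 := hd 3 4 (by decide)
  set G' := SimpleGraph.fromRel
      (fun p q : {a : V // a ≠ u 4} =>
        G.Adj p.val q.val ∨ (p.val = u 3 ∧ G.Adj (u 4) q.val)) with hG'
  set σ : V → {a : V // a ≠ u 4} :=
    fun a => if h : a = u 4 then ⟨u 3, h34ne⟩ else ⟨a, h⟩ with hσ
  have σ_ne : ∀ (a : V) (h : a ≠ u 4), σ a = ⟨a, h⟩ := by
    intro a h; simp only [hσ]; exact dif_neg h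
  have σ4 : σ (u 4) = ⟨u 3, h34ne⟩ := by simp [hσ]
  have σ3 : σ (u 3) = ⟨u 3, h34ne⟩ := σ_ne _ h34ne
  have σ34 : σ (u 3) = σ (u 4) := by rw [σ3, σ4]
  have σeq : ∀ y z : V, σ y = σ z ↔ (y = z ∨ (y = u 3 ∧ z = u 4) ∨ (y = u 4 ∧ z = u 3)) := by
    intro y z
    constructor
    · intro h
      by_cases hy : y = u 4 <;> by_cases hz : z = u 4
      · exact Or.inl (hy.trans hz.symm)
      · rw [hy, σ4, σ_ne z hz] at h
        exact Or.inr (Or.inr ⟨hy, (congrArg Subtype.val h).symm⟩)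
      · rw [hz, σ4, σ_ne y hy] at h
        exact Or.inr (Or.inl ⟨congrArg Subtype.val h, hz⟩)
      · rw [σ_ne y hy, σ_ne z hz] at h
        exact Or.inl (congrArg Subtype.val h)
    · rintro (rfl | ⟨rfl, rfl⟩ | ⟨rfl, rfl⟩)
      · rfl
      · rw [σ3, σ4]
      · rw [σ3, σ4]
  have σmatch : ∀ y z : V, z ≠ u 3 → z ≠ u 4 → σ y = σ z → y = z := by
    intro y z h3 h4' h
    rcases (σeq y z).mp h with h | ⟨h1, h2⟩ | ⟨h1, h2⟩
    · exact h
    · exact absurd h2 h4'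
    · exact absurd h2 h3
  have σmatch34 : ∀ y : V, σ y = σ (u 3) → y = u 3 ∨ y = u 4 := by
    intro y h
    rcases (σeq y (u 3)).mp h with h | ⟨h1, h2⟩ | ⟨h1, h2⟩
    · exact Or.inl h
    · exact absurd h2 h34ne
    · exact Or.inr h1
  have hG'adj : ∀ p q : {a : V // a ≠ u 4}, G'.Adj p q ↔ p ≠ q ∧
      (G.Adj p.val q.val ∨ (p.val = u 3 ∧ G.Adj (u 4) q.val) ∨
        (q.val = u 3 ∧ G.Adj (u 4) p.val)) := by
    intro p q
    rw [hG', SimpleGraph.fromRel_adj]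
    constructor
    · rintro ⟨hne', h⟩
      refine ⟨hne', ?_⟩
      rcases h with (h | h) | (h | h)
      · exact Or.inl h
      · exact Or.inr (Or.inl h)
      · exact Or.inl h.symm
      · exact Or.inr (Or.inr h)
    · rintro ⟨hne', h⟩
      refine ⟨hne', ?_⟩
      rcases h with h | h | h
      · exact Or.inl (Or.inl h)
      · exact Or.inl (Or.inr h)
      · exact Or.inr (Or.inr h)
  have adjσ : ∀ a b : V, G.Adj a b → ¬(a = u 3 ∧ b = u 4) → ¬(a = u 4 ∧ b = u 3) →
      G'.Adj (σ a) (σ b) := by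
    intro a b hab h1 h2
    rw [hG'adj]
    by_cases ha : a = u 4 <;> by_cases hb : b = u 4
    · exact absurd (ha.trans hb.symm) hab.ne
    · subst ha
      have hb3 : b ≠ u 3 := fun h => h2 ⟨rfl, h⟩
      rw [σ4, σ_ne b hb]
      exact ⟨fun h => hb3 (congrArg Subtype.val h).symm, Or.inr (Or.inl ⟨rfl, hab⟩)⟩
    · subst hb
      have ha3 : a ≠ u 3 := fun h => h1 ⟨h, rfl⟩
      rw [σ4, σ_ne a ha]
      exact ⟨fun h => ha3 (congrArg Subtype.val h), Or.inr (Or.inr ⟨rfl, hab.symm⟩)⟩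
    · rw [σ_ne a ha, σ_ne b hb]
      exact ⟨fun h => hab.ne (congrArg Subtype.val h), Or.inl hab⟩
  have ind_adj : ∀ (W : Set V) (a b : ↥W), (G.induce W).Adj a b ↔ G.Adj a.val b.val := by
    intro W a b; simp
  have ind_adj' : ∀ (W : Set {a : V // a ≠ u 4}) (a b : ↥W),
      (G'.induce W).Adj a b ↔ G'.Adj a.val b.val := by
    intro W a b; simp
  -- ===== the two special faces =====
  set Fv : Finset (Sym2 V) := {s(v, u 3), s(u 3, u 4), s(v, u 4)} with hFv
  set Fx : Finset (Sym2 V) := {s(x, u 3), s(u 3, u 4), s(x, u 4)} with hFx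
  have core : ∀ t : V, G.Adj (u 3) t → G.Adj (u 4) t → t = v ∨ t = x := by
    intro t h3 h4'
    rcases (hN3 t).mp h3 with rfl | rfl | rfl | rfl
    · have := (hN4 (u 2)).mp h4'
      simp [hd 2 3 (by decide), hd 2 5 (by decide), Ne.symm (hv 2), Ne.symm (hx 2)] at this
    · exact absurd h4' (G.loopless.irrefl _)
    · exact Or.inl rfl
    · exact Or.inr rfl
  have hLA : ∀ f ∈ PT.faces, s(u 3, u 4) ∈ f → f = Fv ∨ f = Fx := by
    intro f hf hef
    obtain ⟨a, b, c, ⟨hab, hac, hbc, g1, g2, g3⟩, rfl⟩ := PT.face_tri f hf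
    simp only [Finset.mem_insert, Finset.mem_singleton, Sym2.eq_iff] at hef
    rcases hef with (⟨rfl, rfl⟩ | ⟨rfl, rfl⟩) | (⟨rfl, rfl⟩ | ⟨rfl, rfl⟩) | (⟨rfl, rfl⟩ | ⟨rfl, rfl⟩)
    · -- a = u3, b = u4, t = c
      rcases core c g3 g2 with rfl | rfl
      · refine Or.inl (tri_eq' hab hac hbc (hv 3) (hv 4) h34ne ?_)
        ext t; simp only [Finset.mem_insert, Finset.mem_singleton]; tauto
      · refine Or.inr (tri_eq' hab hac hbc (hx 3) (hx 4) h34ne ?_)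
        ext t; simp only [Finset.mem_insert, Finset.mem_singleton]; tauto
    · -- a = u4, b = u3, t = c
      rcases core c g2 g3 with rfl | rfl
      · refine Or.inl (tri_eq' hab hac hbc (hv 3) (hv 4) h34ne ?_)
        ext t; simp only [Finset.mem_insert, Finset.mem_singleton]; tauto
      · refine Or.inr (tri_eq' hab hac hbc (hx 3) (hx 4) h34ne ?_)
        ext t; simp only [Finset.mem_insert, Finset.mem_singleton]; tauto
    · -- b = u3, c = u4, t = a
      rcases core a g1.symm g3.symm with rfl | rfl
      · exact Or.inl rfl
      · exact Or.inr rfl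
    · -- b = u4, c = u3, t = a
      rcases core a g3.symm g1.symm with rfl | rfl
      · refine Or.inl (tri_eq' hab hac hbc (hv 3) (hv 4) h34ne ?_)
        ext t; simp only [Finset.mem_insert, Finset.mem_singleton]; tauto
      · refine Or.inr (tri_eq' hab hac hbc (hx 3) (hx 4) h34ne ?_)
        ext t; simp only [Finset.mem_insert, Finset.mem_singleton]; tauto
    · -- a = u3, c = u4, t = b
      rcases core b g1 g2.symm with rfl | rfl
      · refine Or.inl (tri_eq' hab hac hbc (hv 3) (hv 4) h34ne ?_)
        ext t; simp only [Finset.mem_insert, Finset.mem_singleton]; tauto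
      · refine Or.inr (tri_eq' hab hac hbc (hx 3) (hx 4) h34ne ?_)
        ext t; simp only [Finset.mem_insert, Finset.mem_singleton]; tauto
    · -- a = u4, c = u3, t = b
      rcases core b g2.symm g1 with rfl | rfl
      · refine Or.inl (tri_eq' hab hac hbc (hv 3) (hv 4) h34ne ?_)
        ext t; simp only [Finset.mem_insert, Finset.mem_singleton]; tauto
      · refine Or.inr (tri_eq' hab hac hbc (hx 3) (hx 4) h34ne ?_)
        ext t; simp only [Finset.mem_insert, Finset.mem_singleton]; tauto
  have e34E : s(u 3, u 4) ∈ G.edgeSet := a34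
  have hFvx_ne : Fv ≠ Fx := by
    intro h
    have hm : s(v, u 3) ∈ Fx := by rw [← h, hFv]; simp
    rw [hFx] at hm
    simp [Sym2.eq_iff, hvx, hv 3, hv 4, Ne.symm h34ne] at hm
  have hset34 : {f ∈ PT.faces | s(u 3, u 4) ∈ f} = {Fv, Fx} := by
    apply Set.eq_of_subset_of_ncard_le
    · rintro f ⟨hf, he⟩
      rcases hLA f hf he with rfl | rfl
      · exact Or.inl rfl
      · exact Or.inr rfl
    · rw [Set.ncard_pair hFvx_ne, PT.edge_faces _ e34E]
    · exact Set.toFinite _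
  have hFvF : Fv ∈ PT.faces := by
    have : Fv ∈ {f ∈ PT.faces | s(u 3, u 4) ∈ f} := by
      rw [hset34]; exact Or.inl rfl
    exact this.1
  have hFxF : Fx ∈ PT.faces := by
    have : Fx ∈ {f ∈ PT.faces | s(u 3, u 4) ∈ f} := by
      rw [hset34]; exact Or.inr rfl
    exact this.1
  have hfe : ∀ f ∈ PT.faces, ∀ e ∈ f, e ∈ G.edgeSet := by
    intro f hf e he
    obtain ⟨a, b, c, ⟨hab, hac, hbc, g1, g2, g3⟩, rfl⟩ := PT.face_tri f hf
    simp only [Finset.mem_insert, Finset.mem_singleton] at he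
    rcases he with rfl | rfl | rfl
    exacts [g1, g2, g3]
  have hno34 : ∀ f ∈ PT.faces, f ≠ Fv → f ≠ Fx → s(u 3, u 4) ∉ f := by
    intro f hf h1 h2 he
    rcases hLA f hf he with rfl | rfl
    · exact h1 rfl
    · exact h2 rfl
  have htwo : ∀ f ∈ PT.faces, ∀ p q r : V, p ≠ q → p ≠ r → q ≠ r →
      s(p, q) ∈ f → s(p, r) ∈ f → f = {s(p, q), s(q, r), s(p, r)} := by
    intro f hf p q r hpq hpr hqr h1 h2
    obtain ⟨a, b, c, ⟨hab, hac, hbc, g1, g2, g3⟩, rfl⟩ := PT.face_tri f hf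
    have hp : p ∈ ({a, b, c} : Finset V) := (tri_vert' p).mpr ⟨s(p,q), h1, by simp⟩
    have hq : q ∈ ({a, b, c} : Finset V) := (tri_vert' q).mpr ⟨s(p,q), h1, by simp⟩
    have hr : r ∈ ({a, b, c} : Finset V) := (tri_vert' r).mpr ⟨s(p,r), h2, by simp⟩
    have hsub : ({p, q, r} : Finset V) ⊆ {a, b, c} := by
      intro z hz
      simp only [Finset.mem_insert, Finset.mem_singleton] at hz
      rcases hz with rfl | rfl | rfl
      exacts [hp, hq, hr]
    have hcard1 : ({a, b, c} : Finset V).card = 3 :=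
      Finset.card_eq_three.mpr ⟨a, b, c, hab, hac, hbc, rfl⟩
    have hcard2 : ({p, q, r} : Finset V).card = 3 :=
      Finset.card_eq_three.mpr ⟨p, q, r, hpq, hpr, hqr, rfl⟩
    have hss := Finset.eq_of_subset_of_card_le hsub (by rw [hcard1, hcard2])
    exact tri_eq' hab hac hbc hpq hpr hqr hss.symm
  -- ===== injectivity of the face map =====
  have find5 : ∀ p q : V, G.Adj (u 4) p → G.Adj (u 4) q → G.Adj p q →
      p ≠ u 3 → q ≠ u 3 → p = u 5 ∨ q = u 5 := by
    intro p q hp hq hpq hp3 hq3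
    rcases (hN4 p).mp hp with rfl | rfl | rfl | rfl
    · exact absurd rfl hp3
    · exact Or.inl rfl
    · rcases (hN4 q).mp hq with rfl | rfl | rfl | rfl
      · exact absurd rfl hq3
      · exact Or.inr rfl
      · exact absurd hpq (G.loopless.irrefl _)
      · exact absurd hpq hnadj
    · rcases (hN4 q).mp hq with rfl | rfl | rfl | rfl
      · exact absurd rfl hq3
      · exact Or.inr rfl
      · exact absurd hpq.symm hnadj
      · exact absurd hpq (G.loopless.irrefl _)
  have hinjFM : Set.InjOn (fun f : Finset (Sym2 V) => f.image (Sym2.map σ))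
      (PT.faces \ {Fv, Fx}) := by
    have badcase : ∀ a b c a' b' c' : V,
        G.Adj a b → G.Adj b c → G.Adj a c →
        G.Adj a' b' → G.Adj b' c' → G.Adj a' c' →
        (({a, b, c} : Finset V).image σ = ({a', b', c'} : Finset V).image σ) →
        u 3 ∉ ({a, b, c} : Finset V) → u 3 ∈ ({a', b', c'} : Finset V) →
        u 4 ∈ ({a, b, c} : Finset V) → False := by
      intro a b c a' b' c' g1 g2 g3 g1' g2' g3' hT h3S h3S' h4S
      have h4or : u 4 = a ∨ u 4 = b ∨ u 4 = c := by simpa using h4S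
      have hu5 : u 5 ∈ ({a, b, c} : Finset V) := by
        rcases h4or with h | h | h
        · rcases h with rfl
          rcases find5 b c g1 g3 g2 (fun hh => h3S (by rw [← hh]; simp))
            (fun hh => h3S (by rw [← hh]; simp)) with rfl | rfl <;> simp
        · rcases h with rfl
          rcases find5 a c g1.symm g2 g3 (fun hh => h3S (by rw [← hh]; simp))
            (fun hh => h3S (by rw [← hh]; simp)) with rfl | rfl <;> simp
        · rcases h with rfl
          rcases find5 a b g3.symm g2.symm g1 (fun hh => h3S (by rw [← hh]; simp))
            (fun hh => h3S (by rw [← hh]; simp)) with rfl | rfl <;> simp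
      have hmem : σ (u 5) ∈ ({a', b', c'} : Finset V).image σ := by
        rw [← hT]; exact Finset.mem_image_of_mem _ hu5
      obtain ⟨y, hy, hyy⟩ := Finset.mem_image.mp hmem
      have hy5 : y = u 5 := by
        rcases (σeq y (u 5)).mp hyy with h | ⟨h1, h2⟩ | ⟨h1, h2⟩
        · exact h
        · exact absurd h2 (hd 5 4 (by decide))
        · exact absurd h2 (hd 5 3 (by decide))
      subst hy5
      have hadj35 : G.Adj (u 3) (u 5) := by
        have h3or : u 3 = a' ∨ u 3 = b' ∨ u 3 = c' := by simpa using h3S'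
        have h5or : u 5 = a' ∨ u 5 = b' ∨ u 5 = c' := by simpa using hy
        exact adj_tri' g1' g2' g3' h3or h5or (hd 3 5 (by decide))
      have := (hN3 (u 5)).mp hadj35
      simp [hd 5 2 (by decide), hd 5 4 (by decide), Ne.symm (hv 5), Ne.symm (hx 5)] at this
    rintro f1 hf1 f2 hf2 himg
    have hf1F := hf1.1
    have hf1s := not_or.mp hf1.2
    have hf2F := hf2.1
    have hf2s := not_or.mp hf2.2
    obtain ⟨a, b, c, ⟨hab, hac, hbc, g1, g2, g3⟩, rfl⟩ := PT.face_tri f1 hf1F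
    obtain ⟨a2, b2, c2, ⟨hab2, hac2, hbc2, g1', g2', g3'⟩, rfl⟩ := PT.face_tri f2 hf2F
    dsimp only at himg
    have hnb1 : ¬(u 3 ∈ ({a, b, c} : Finset V) ∧ u 4 ∈ ({a, b, c} : Finset V)) := by
      rintro ⟨h3, h4'⟩
      exact hno34 _ hf1F hf1s.1 hf1s.2
        ((tri_mem' hab hac hbc _).mpr ⟨u 3, h3, u 4, h4', h34ne, rfl⟩)
    have hnb2 : ¬(u 3 ∈ ({a2, b2, c2} : Finset V) ∧ u 4 ∈ ({a2, b2, c2} : Finset V)) := by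
      rintro ⟨h3, h4'⟩
      exact hno34 _ hf2F hf2s.1 hf2s.2
        ((tri_mem' hab2 hac2 hbc2 _).mpr ⟨u 3, h3, u 4, h4', h34ne, rfl⟩)
    have him1 : ({s(a,b), s(b,c), s(a,c)} : Finset (Sym2 V)).image (Sym2.map σ)
        = {s(σ a, σ b), s(σ b, σ c), s(σ a, σ c)} := by
      simp [Finset.image_insert, Sym2.map_pair_eq]
    have him2 : ({s(a2,b2), s(b2,c2), s(a2,c2)} : Finset (Sym2 V)).image (Sym2.map σ)
        = {s(σ a2, σ b2), s(σ b2, σ c2), s(σ a2, σ c2)} := by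
      simp [Finset.image_insert, Sym2.map_pair_eq]
    have hTT : ({σ a, σ b, σ c} : Finset {a : V // a ≠ u 4}) = {σ a2, σ b2, σ c2} := by
      ext zz
      rw [tri_vert' zz, tri_vert' zz, ← him1, ← him2, himg]
    have hUU : ({a, b, c} : Finset V).image σ = ({a2, b2, c2} : Finset V).image σ := by
      have e1 : ({a, b, c} : Finset V).image σ = {σ a, σ b, σ c} := by simp
      have e2 : ({a2, b2, c2} : Finset V).image σ = {σ a2, σ b2, σ c2} := by simp
      rw [e1, e2, hTT]
    have hSS : ({a, b, c} : Finset V) = {a2, b2, c2} := by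
      have hsub : ({a, b, c} : Finset V) ⊆ {a2, b2, c2} := by
        intro z hz
        have hz' : σ z ∈ ({σ a2, σ b2, σ c2} : Finset {a : V // a ≠ u 4}) := by
          rw [← hTT]
          rcases (by simpa using hz : z = a ∨ z = b ∨ z = c) with rfl | rfl | rfl <;> simp
        have : ∃ y ∈ ({a2, b2, c2} : Finset V), σ y = σ z := by
          rcases (by simpa using hz' : σ z = σ a2 ∨ σ z = σ b2 ∨ σ z = σ c2) with h | h | h
          · exact ⟨a2, by simp, h.symm⟩
          · exact ⟨b2, by simp, h.symm⟩
          · exact ⟨c2, by simp, h.symm⟩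
        obtain ⟨y, hy, hyz⟩ := this
        rcases (σeq y z).mp hyz with rfl | ⟨h1, h2⟩ | ⟨h1, h2⟩
        · exact hy
        · subst h1; subst h2
          exact (badcase a b c a2 b2 c2 g1 g2 g3 g1' g2' g3' hUU
            (fun hc => hnb1 ⟨hc, hz⟩) hy hz).elim
        · subst h1; subst h2
          exact (badcase a2 b2 c2 a b c g1' g2' g3' g1 g2 g3 hUU.symm
            (fun hc => hnb2 ⟨hc, hy⟩) hz hy).elim
      have hcard1 : ({a, b, c} : Finset V).card = 3 :=
        Finset.card_eq_three.mpr ⟨a, b, c, hab, hac, hbc, rfl⟩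
      have hcard2 : ({a2, b2, c2} : Finset V).card = 3 :=
        Finset.card_eq_three.mpr ⟨a2, b2, c2, hab2, hac2, hbc2, rfl⟩
      exact Finset.eq_of_subset_of_card_le hsub (by rw [hcard1, hcard2])
    exact tri_eq' hab hac hbc hab2 hac2 hbc2 hSS
  -- ===== counting faces on each contracted edge =====
  have hcnt1 : ∀ p q : V, p ≠ u 3 → p ≠ u 4 → q ≠ u 3 → q ≠ u 4 → G.Adj p q →
      {f ∈ PT.faces \ {Fv, Fx} | ∃ e ∈ f, Sym2.map σ e = s(σ p, σ q)}.ncard = 2 := by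
    intro p q hp3 hp4 hq3 hq4 hpq
    have hkey : {f ∈ PT.faces \ {Fv, Fx} | ∃ e ∈ f, Sym2.map σ e = s(σ p, σ q)}
        = {f ∈ PT.faces | s(p, q) ∈ f} := by
      ext f
      constructor
      · rintro ⟨⟨hfF, hfs⟩, e, he, hee⟩
        refine ⟨hfF, ?_⟩
        obtain ⟨y, z, rfl⟩ := sym2_rep' e
        rw [Sym2.map_pair_eq, Sym2.eq_iff] at hee
        rcases hee with ⟨h1, h2⟩ | ⟨h1, h2⟩
        · rw [σmatch y p hp3 hp4 h1, σmatch z q hq3 hq4 h2] at he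
          exact he
        · rw [σmatch y q hq3 hq4 h1, σmatch z p hp3 hp4 h2] at he
          rwa [Sym2.eq_swap] at he
      · rintro ⟨hfF, hpe⟩
        have hnv : f ≠ Fv := by
          rintro rfl
          rw [hFv] at hpe
          simp [Sym2.eq_iff, hp3, hp4, hq3, hq4] at hpe
        have hnx : f ≠ Fx := by
          rintro rfl
          rw [hFx] at hpe
          simp [Sym2.eq_iff, hp3, hp4, hq3, hq4] at hpe
        exact ⟨⟨hfF, by simp [hnv, hnx]⟩, s(p, q), hpe, by rw [Sym2.map_pair_eq]⟩
    rw [hkey]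
    exact PT.edge_faces _ hpq
  have hcnt2 : ∀ b0 : V, (s(u 3, b0) ∈ G.edgeSet ∧ s(u 4, b0) ∉ G.edgeSet) ∨
        (s(u 3, b0) ∉ G.edgeSet ∧ s(u 4, b0) ∈ G.edgeSet) →
      b0 ≠ u 3 → b0 ≠ u 4 →
      s(u 3, b0) ∉ Fv → s(u 3, b0) ∉ Fx → s(u 4, b0) ∉ Fv → s(u 4, b0) ∉ Fx →
      {f ∈ PT.faces \ {Fv, Fx} | ∃ e ∈ f, Sym2.map σ e = s(σ (u 3), σ b0)}.ncard = 2 := by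
    intro b0 hcase hb3 hb4 h3v h3x h4v h4x
    -- the good edge
    obtain ⟨e0, he0E, he0bad, h0v, h0x⟩ : ∃ e0, e0 ∈ G.edgeSet ∧
        (∀ f ∈ PT.faces, (∃ e ∈ f, Sym2.map σ e = s(σ (u 3), σ b0)) ↔ e0 ∈ f) ∧
        e0 ∉ Fv ∧ e0 ∉ Fx := by
      rcases hcase with ⟨hE3, hE4⟩ | ⟨hE3, hE4⟩
      · refine ⟨s(u 3, b0), hE3, ?_, h3v, h3x⟩
        intro f hfF
        constructor
        · rintro ⟨e, he, hee⟩
          obtain ⟨y, z, rfl⟩ := sym2_rep' e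
          rw [Sym2.map_pair_eq, Sym2.eq_iff] at hee
          rcases hee with ⟨h1, h2⟩ | ⟨h1, h2⟩
          · rw [σmatch z b0 hb3 hb4 h2] at he
            rcases σmatch34 y h1 with rfl | rfl
            · exact he
            · exact absurd (hfe f hfF _ he) hE4
          · rw [σmatch y b0 hb3 hb4 h1] at he
            rcases σmatch34 z h2 with rfl | rfl
            · rwa [Sym2.eq_swap] at he
            · rw [Sym2.eq_swap] at he
              exact absurd (hfe f hfF _ he) hE4
        · intro he
          exact ⟨s(u 3, b0), he, by rw [Sym2.map_pair_eq]⟩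
      · refine ⟨s(u 4, b0), hE4, ?_, h4v, h4x⟩
        intro f hfF
        constructor
        · rintro ⟨e, he, hee⟩
          obtain ⟨y, z, rfl⟩ := sym2_rep' e
          rw [Sym2.map_pair_eq, Sym2.eq_iff] at hee
          rcases hee with ⟨h1, h2⟩ | ⟨h1, h2⟩
          · rw [σmatch z b0 hb3 hb4 h2] at he
            rcases σmatch34 y h1 with rfl | rfl
            · exact absurd (hfe f hfF _ he) hE3
            · exact he
          · rw [σmatch y b0 hb3 hb4 h1] at he
            rcases σmatch34 z h2 with rfl | rfl
            · rw [Sym2.eq_swap] at he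
              exact absurd (hfe f hfF _ he) hE3
            · rwa [Sym2.eq_swap] at he
        · intro he
          refine ⟨s(u 4, b0), he, ?_⟩
          rw [Sym2.map_pair_eq, ← σ34]
    have hkey : {f ∈ PT.faces \ {Fv, Fx} | ∃ e ∈ f, Sym2.map σ e = s(σ (u 3), σ b0)}
        = {f ∈ PT.faces | e0 ∈ f} := by
      ext f
      constructor
      · rintro ⟨⟨hfF, hfs⟩, hex⟩
        exact ⟨hfF, (he0bad f hfF).mp hex⟩
      · rintro ⟨hfF, he⟩
        have hnv : f ≠ Fv := by rintro rfl; exact h0v he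
        have hnx : f ≠ Fx := by rintro rfl; exact h0x he
        exact ⟨⟨hfF, by simp [hnv, hnx]⟩, (he0bad f hfF).mpr he⟩
    rw [hkey]
    exact PT.edge_faces _ he0E
  have hcnt34 : ∀ (t : V) (Ft Fo : Finset (Sym2 V)),
      (Ft = Fv ∧ Fo = Fx) ∨ (Ft = Fx ∧ Fo = Fv) →
      Ft = {s(t, u 3), s(u 3, u 4), s(t, u 4)} →
      G.Adj (u 3) t → G.Adj (u 4) t → t ≠ u 3 → t ≠ u 4 →
      s(u 3, t) ∉ Fo → s(u 4, t) ∉ Fo →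
      {f ∈ PT.faces \ {Fv, Fx} | ∃ e ∈ f, Sym2.map σ e = s(σ (u 3), σ t)}.ncard = 2 := by
    intro t Ft Fo hpair hFt h3t h4t ht3 ht4 ho3 ho4
    have hFtF : Ft ∈ PT.faces := by
      rcases hpair with ⟨rfl, _⟩ | ⟨rfl, _⟩
      · exact hFvF
      · exact hFxF
    have hsp : ∀ f : Finset (Sym2 V), (f ≠ Ft ∧ f ≠ Fo) ↔ (f ≠ Fv ∧ f ≠ Fx) := by
      intro f
      rcases hpair with ⟨rfl, rfl⟩ | ⟨rfl, rfl⟩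
      · exact Iff.rfl
      · exact ⟨fun h => ⟨h.2, h.1⟩, fun h => ⟨h.2, h.1⟩⟩
    have key : {f ∈ PT.faces \ {Fv, Fx} | ∃ e ∈ f, Sym2.map σ e = s(σ (u 3), σ t)}
        = ({f ∈ PT.faces | s(u 3, t) ∈ f} \ {Ft}) ∪ ({f ∈ PT.faces | s(u 4, t) ∈ f} \ {Ft}) := by
      ext f
      constructor
      · rintro ⟨⟨hfF, hfs⟩, e, he, hee⟩
        have hfs' := not_or.mp hfs
        have hft : f ≠ Ft := ((hsp f).mpr hfs').1
        obtain ⟨y, z, rfl⟩ := sym2_rep' e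
        rw [Sym2.map_pair_eq, Sym2.eq_iff] at hee
        rcases hee with ⟨h1, h2⟩ | ⟨h1, h2⟩
        · rw [σmatch z t ht3 ht4 h2] at he
          rcases σmatch34 y h1 with rfl | rfl
          · exact Or.inl ⟨⟨hfF, he⟩, hft⟩
          · exact Or.inr ⟨⟨hfF, he⟩, hft⟩
        · rw [σmatch y t ht3 ht4 h1] at he
          rw [Sym2.eq_swap] at he
          rcases σmatch34 z h2 with rfl | rfl
          · exact Or.inl ⟨⟨hfF, he⟩, hft⟩
          · exact Or.inr ⟨⟨hfF, he⟩, hft⟩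
      · have hskel : ∀ f0 : Finset (Sym2 V), f0 ∈ PT.faces → f0 ≠ Ft →
            (s(u 3, t) ∈ f0 ∨ s(u 4, t) ∈ f0) →
            f0 ∈ {f ∈ PT.faces \ {Fv, Fx} | ∃ e ∈ f, Sym2.map σ e = s(σ (u 3), σ t)} := by
          intro f0 hfF hft hmem
          have hfo : f0 ≠ Fo := by
            rintro rfl
            rcases hmem with h | h
            · exact ho3 h
            · exact ho4 h
          have hfs := (hsp f0).mp ⟨hft, hfo⟩
          refine ⟨⟨hfF, by simp [hfs.1, hfs.2]⟩, ?_⟩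
          rcases hmem with h | h
          · exact ⟨s(u 3, t), h, by rw [Sym2.map_pair_eq]⟩
          · exact ⟨s(u 4, t), h, by rw [Sym2.map_pair_eq, ← σ34]⟩
        rintro (⟨⟨hfF, hmem⟩, hft⟩ | ⟨⟨hfF, hmem⟩, hft⟩)
        · exact hskel f hfF hft (Or.inl hmem)
        · exact hskel f hfF hft (Or.inr hmem)
    rw [key]
    have hFtA : Ft ∈ {f ∈ PT.faces | s(u 3, t) ∈ f} := by
      refine ⟨hFtF, ?_⟩
      rw [hFt]
      simp [Sym2.eq_iff]
    have hFtB : Ft ∈ {f ∈ PT.faces | s(u 4, t) ∈ f} := by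
      refine ⟨hFtF, ?_⟩
      rw [hFt]
      simp [Sym2.eq_iff]
    have hdisj : Disjoint ({f ∈ PT.faces | s(u 3, t) ∈ f} \ {Ft})
        ({f ∈ PT.faces | s(u 4, t) ∈ f} \ {Ft}) := by
      rw [Set.disjoint_left]
      rintro f ⟨⟨hfF, h3⟩, hft⟩ ⟨⟨_, h4'⟩, _⟩
      apply hft
      have h3' : s(t, u 3) ∈ f := by rwa [Sym2.eq_swap] at h3
      have h4'' : s(t, u 4) ∈ f := by rwa [Sym2.eq_swap] at h4'
      have := htwo f hfF t (u 3) (u 4) ht3 ht4 h34ne h3' h4''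
      rw [this, hFt]
      exact rfl
    rw [Set.ncard_union_eq hdisj (Set.toFinite _) (Set.toFinite _)]
    rw [Set.ncard_diff_singleton_of_mem hFtA,
        Set.ncard_diff_singleton_of_mem hFtB]
    rw [PT.edge_faces _ ((SimpleGraph.mem_edgeSet G).mpr h3t),
        PT.edge_faces _ ((SimpleGraph.mem_edgeSet G).mpr h4t)]
  have mainw : ∀ t : V, t ≠ u 3 → t ≠ u 4 → (G.Adj (u 3) t ∨ G.Adj (u 4) t) →
      {f ∈ PT.faces \ {Fv, Fx} | ∃ e ∈ f, Sym2.map σ e = s(σ (u 3), σ t)}.ncard = 2 := by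
    intro t ht3 ht4 hadj
    have htc : t = u 2 ∨ t = u 5 ∨ t = v ∨ t = x := by
      rcases hadj with h | h
      · rcases (hN3 t).mp h with rfl | rfl | rfl | rfl
        · exact Or.inl rfl
        · exact absurd rfl ht4
        · exact Or.inr (Or.inr (Or.inl rfl))
        · exact Or.inr (Or.inr (Or.inr rfl))
      · rcases (hN4 t).mp h with rfl | rfl | rfl | rfl
        · exact absurd rfl ht3
        · exact Or.inr (Or.inl rfl)
        · exact Or.inr (Or.inr (Or.inl rfl))
        · exact Or.inr (Or.inr (Or.inr rfl))
    rcases htc with h | h | h | h <;> subst t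
    · -- t = u 2
      apply hcnt2 (u 2)
      · left
        constructor
        · exact (SimpleGraph.mem_edgeSet G).mpr a23.symm
        · intro hE
          have := (hN4 (u 2)).mp ((SimpleGraph.mem_edgeSet G).mp hE)
          simp [hd 2 3 (by decide), hd 2 5 (by decide), Ne.symm (hv 2), Ne.symm (hx 2)] at this
      · exact hd 2 3 (by decide)
      · exact hd 2 4 (by decide)
      · rw [hFv]
        simp [Sym2.eq_iff, hd 2 3 (by decide), hd 2 4 (by decide), Ne.symm (hv 2),
          Ne.symm h34ne, hd 3 2 (by decide), hv 3, hv 4]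
      · rw [hFx]
        simp [Sym2.eq_iff, hd 2 3 (by decide), hd 2 4 (by decide), Ne.symm (hx 2),
          Ne.symm h34ne, hd 3 2 (by decide), hx 3, hx 4]
      · rw [hFv]
        simp [Sym2.eq_iff, hd 2 3 (by decide), hd 2 4 (by decide), Ne.symm (hv 2),
          h34ne, hd 4 2 (by decide), hv 3, hv 4, hd 4 3 (by decide), Ne.symm (hv 4)]
      · rw [hFx]
        simp [Sym2.eq_iff, hd 2 3 (by decide), hd 2 4 (by decide), Ne.symm (hx 2),
          h34ne, hd 4 2 (by decide), hx 3, hx 4, hd 4 3 (by decide), Ne.symm (hx 4)]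
    · -- t = u 5
      apply hcnt2 (u 5)
      · right
        constructor
        · intro hE
          have := (hN3 (u 5)).mp ((SimpleGraph.mem_edgeSet G).mp hE)
          simp [hd 5 2 (by decide), hd 5 4 (by decide), Ne.symm (hv 5), Ne.symm (hx 5)] at this
        · exact (SimpleGraph.mem_edgeSet G).mpr a45
      · exact hd 5 3 (by decide)
      · exact hd 5 4 (by decide)
      · rw [hFv]
        simp [Sym2.eq_iff, hd 3 5 (by decide), hd 5 4 (by decide), Ne.symm (hv 5),
          hv 3, hv 4, hd 3 4 (by decide), hd 5 3 (by decide)]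
      · rw [hFx]
        simp [Sym2.eq_iff, hd 3 5 (by decide), hd 5 4 (by decide), Ne.symm (hx 5),
          hx 3, hx 4, hd 3 4 (by decide), hd 5 3 (by decide)]
      · rw [hFv]
        simp [Sym2.eq_iff, hd 4 5 (by decide), hd 5 3 (by decide), Ne.symm (hv 5),
          hv 3, hv 4, hd 4 3 (by decide), hd 5 4 (by decide)]
      · rw [hFx]
        simp [Sym2.eq_iff, hd 4 5 (by decide), hd 5 3 (by decide), Ne.symm (hx 5),
          hx 3, hx 4, hd 4 3 (by decide), hd 5 4 (by decide)]
    · -- t = v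
      apply hcnt34 v Fv Fx (Or.inl ⟨rfl, rfl⟩)
      · rw [hFv]
      · exact (av 3 (by decide) (by decide)).symm
      · exact (av 4 (by decide) (by decide)).symm
      · exact hv 3
      · exact hv 4
      · rw [hFx]
        simp [Sym2.eq_iff, hv 3, hv 4, hx 3, hx 4, hvx, Ne.symm hvx, h34ne, Ne.symm h34ne, Ne.symm (hv 3), Ne.symm (hv 4), Ne.symm (hx 3), Ne.symm (hx 4), hd 4 3 (by decide), hd 3 4 (by decide)]
      · rw [hFx]
        simp [Sym2.eq_iff, hv 3, hv 4, hx 3, hx 4, hvx, Ne.symm hvx, h34ne, Ne.symm h34ne, Ne.symm (hv 3), Ne.symm (hv 4), Ne.symm (hx 3), Ne.symm (hx 4), hd 4 3 (by decide), hd 3 4 (by decide)]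
    · -- t = x
      apply hcnt34 x Fx Fv (Or.inr ⟨rfl, rfl⟩)
      · rw [hFx]
      · exact ax 3 (by decide) (by decide)
      · exact ax 4 (by decide) (by decide)
      · exact hx 3
      · exact hx 4
      · rw [hFv]
        simp [Sym2.eq_iff, hv 3, hv 4, hx 3, hx 4, hvx, Ne.symm hvx, h34ne, Ne.symm h34ne, Ne.symm (hv 3), Ne.symm (hv 4), Ne.symm (hx 3), Ne.symm (hx 4), hd 4 3 (by decide), hd 3 4 (by decide)]
      · rw [hFv]
        simp [Sym2.eq_iff, hv 3, hv 4, hx 3, hx 4, hvx, Ne.symm hvx, h34ne, Ne.symm h34ne, Ne.symm (hv 3), Ne.symm (hv 4), Ne.symm (hx 3), Ne.symm (hx 4), hd 4 3 (by decide), hd 3 4 (by decide)]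
  -- ===== the new face set =====
  set Fs : Set (Finset (Sym2 {a : V // a ≠ u 4})) :=
    (fun f : Finset (Sym2 V) => f.image (Sym2.map σ)) '' (PT.faces \ {Fv, Fx}) with hFs
  have hSID : ∀ e' : Sym2 {a : V // a ≠ u 4},
      {f' ∈ Fs | e' ∈ f'} = (fun f : Finset (Sym2 V) => f.image (Sym2.map σ)) ''
        {f ∈ PT.faces \ {Fv, Fx} | ∃ e ∈ f, Sym2.map σ e = e'} := by
    intro e'
    ext f'
    constructor
    · rintro ⟨hf', he'⟩
      rw [hFs] at hf'
      obtain ⟨f, hfd, rfl⟩ := hf'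
      obtain ⟨e, he, hee⟩ := Finset.mem_image.mp he'
      exact ⟨f, ⟨hfd, e, he, hee⟩, rfl⟩
    · rintro ⟨f, ⟨hfd, e, he, hee⟩, rfl⟩
      refine ⟨?_, Finset.mem_image.mpr ⟨e, he, hee⟩⟩
      rw [hFs]
      exact ⟨f, hfd, rfl⟩
  have hcount : ∀ e' ∈ G'.edgeSet, {f' ∈ Fs | e' ∈ f'}.ncard = 2 := by
    intro e' he'
    obtain ⟨p, q, rfl⟩ := sym2_rep' e'
    rw [SimpleGraph.mem_edgeSet, hG'adj] at he'
    obtain ⟨hpq, hrel⟩ := he'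
    rw [hSID, Set.ncard_image_of_injOn (hinjFM.mono (fun f hf => hf.1))]
    by_cases hp3 : p.val = u 3 <;> by_cases hq3 : q.val = u 3
    · exact absurd (Subtype.ext (hp3.trans hq3.symm)) hpq
    · -- p is the contracted vertex
      have hpw : p = σ (u 3) := by rw [σ3]; exact Subtype.ext hp3
      have hqw : q = σ q.val := (σ_ne q.val q.prop).symm
      rw [hpw, hqw]
      apply mainw q.val hq3 q.prop
      rcases hrel with h | ⟨h1, h2⟩ | ⟨h1, h2⟩
      · exact Or.inl (hp3 ▸ h)
      · exact Or.inr h2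
      · exact absurd h1 hq3
    · -- q is the contracted vertex
      have hqw : q = σ (u 3) := by rw [σ3]; exact Subtype.ext hq3
      have hpw : p = σ p.val := (σ_ne p.val p.prop).symm
      rw [Sym2.eq_swap (a := p) (b := q)]
      rw [hqw, hpw]
      apply mainw p.val hp3 p.prop
      rcases hrel with h | ⟨h1, h2⟩ | ⟨h1, h2⟩
      · exact Or.inl (hq3 ▸ h.symm)
      · exact absurd h1 hp3
      · exact Or.inr h2
    · -- ordinary edge
      have hpw : p = σ p.val := (σ_ne p.val p.prop).symm
      have hqw : q = σ q.val := (σ_ne q.val q.prop).symm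
      rw [hpw, hqw]
      apply hcnt1 p.val q.val hp3 p.prop hq3 q.prop
      rcases hrel with h | ⟨h1, h2⟩ | ⟨h1, h2⟩
      · exact h
      · exact absurd h1 hp3
      · exact absurd h1 hq3
  have hftri : ∀ f' ∈ Fs, IsTriangleFace G' f' := by
    intro f' hf'
    rw [hFs] at hf'
    obtain ⟨f, hfd, rfl⟩ := hf'
    have hfF := hfd.1
    have hfs := not_or.mp hfd.2
    obtain ⟨a, b, c, ⟨hab, hac, hbc, g1, g2, g3⟩, rfl⟩ := PT.face_tri f hfF
    have hnb : ¬(u 3 ∈ ({a, b, c} : Finset V) ∧ u 4 ∈ ({a, b, c} : Finset V)) := by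
      rintro ⟨h3, h4'⟩
      exact hno34 _ hfF hfs.1 hfs.2
        ((tri_mem' hab hac hbc _).mpr ⟨u 3, h3, u 4, h4', h34ne, rfl⟩)
    have hpair : ∀ p q : V, p ∈ ({a, b, c} : Finset V) → q ∈ ({a, b, c} : Finset V) →
        ¬(p = u 3 ∧ q = u 4) := by
      rintro p q hp hq ⟨rfl, rfl⟩
      exact hnb ⟨hp, hq⟩
    have hσd : ∀ p q : V, p ∈ ({a, b, c} : Finset V) → q ∈ ({a, b, c} : Finset V) →
        p ≠ q → σ p ≠ σ q := by
      intro p q hp hq hpq h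
      rcases (σeq p q).mp h with h' | ⟨h1, h2⟩ | ⟨h1, h2⟩
      · exact hpq h'
      · exact hpair p q hp hq ⟨h1, h2⟩
      · exact hpair q p hq hp ⟨h2, h1⟩
    refine ⟨σ a, σ b, σ c,
      ⟨hσd a b (by simp) (by simp) hab, hσd a c (by simp) (by simp) hac,
        hσd b c (by simp) (by simp) hbc,
        adjσ a b g1 (hpair a b (by simp) (by simp)) (fun h => hpair b a (by simp) (by simp) ⟨h.2, h.1⟩),
        adjσ b c g2 (hpair b c (by simp) (by simp)) (fun h => hpair c b (by simp) (by simp) ⟨h.2, h.1⟩),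
        adjσ a c g3 (hpair a c (by simp) (by simp)) (fun h => hpair c a (by simp) (by simp) ⟨h.2, h.1⟩)⟩, ?_⟩
    simp [Finset.image_insert, Sym2.map_pair_eq]
  -- ===== edge set of the contraction =====
  set R : Set (Sym2 V) := {s(u 3, u 4), s(u 4, v), s(u 4, x)} with hR
  have hRE : R ⊆ G.edgeSet := by
    intro e he
    rw [hR] at he
    simp only [Set.mem_insert_iff, Set.mem_singleton_iff] at he
    rcases he with rfl | rfl | rfl
    · exact a34
    · exact (av 4 (by decide) (by decide)).symm
    · exact ax 4 (by decide) (by decide)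
  have hnotR : ∀ y z : V, y ≠ u 4 → z ≠ u 4 → s(y, z) ∉ R := by
    intro y z hy hz he
    rw [hR] at he
    simp only [Set.mem_insert_iff, Set.mem_singleton_iff, Sym2.eq_iff] at he
    rcases he with (⟨h1, h2⟩ | ⟨h1, h2⟩) | (⟨h1, h2⟩ | ⟨h1, h2⟩) | (⟨h1, h2⟩ | ⟨h1, h2⟩)
    exacts [hz h2, hy h1, hy h1, hz h2, hy h1, hz h2]
  have hclass2 : ∀ p q : {a : V // a ≠ u 4}, p ≠ q → p.val = u 3 → G.Adj (u 4) q.val →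
      ∃ e ∈ G.edgeSet \ R, Sym2.map σ e = s(p, q) := by
    intro p q hpq hp3 hq4
    have hq3 : q.val ≠ u 3 := fun h => hpq (Subtype.ext (hp3.trans h.symm))
    have hpw : p = σ (u 3) := by rw [σ3]; exact Subtype.ext hp3
    have hqw : q = σ q.val := (σ_ne q.val q.prop).symm
    rcases (hN4 q.val).mp hq4 with h | h | h | h
    · exact absurd h hq3
    · refine ⟨s(u 4, u 5), ⟨(SimpleGraph.mem_edgeSet G).mpr a45, ?_⟩, ?_⟩
      · rw [hR]
        simp [Sym2.eq_iff, hd 4 3 (by decide), hd 5 3 (by decide), hd 5 4 (by decide),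
          Ne.symm (hv 5), Ne.symm (hx 5), Ne.symm (hv 4), Ne.symm (hx 4)]
      · rw [Sym2.map_pair_eq, ← σ34, hpw, hqw, h]
    · refine ⟨s(u 3, v), ⟨(SimpleGraph.mem_edgeSet G).mpr (av 3 (by decide) (by decide)).symm, ?_⟩, ?_⟩
      · exact hnotR _ _ h34ne (hv 4)
      · rw [Sym2.map_pair_eq, hpw, hqw, h]
    · refine ⟨s(u 3, x), ⟨(SimpleGraph.mem_edgeSet G).mpr (ax 3 (by decide) (by decide)), ?_⟩, ?_⟩
      · exact hnotR _ _ h34ne (hx 4)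
      · rw [Sym2.map_pair_eq, hpw, hqw, h]
  have hEs : G'.edgeSet = Sym2.map σ '' (G.edgeSet \ R) := by
    ext e'
    constructor
    · intro he'
      obtain ⟨p, q, rfl⟩ := sym2_rep' e'
      rw [SimpleGraph.mem_edgeSet, hG'adj] at he'
      obtain ⟨hpq, hrel⟩ := he'
      rcases hrel with h | ⟨h1, h2⟩ | ⟨h1, h2⟩
      · refine ⟨s(p.val, q.val), ⟨(SimpleGraph.mem_edgeSet G).mpr h, hnotR _ _ p.prop q.prop⟩, ?_⟩
        rw [Sym2.map_pair_eq, σ_ne p.val p.prop, σ_ne q.val q.prop]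
      · exact hclass2 p q hpq h1 h2
      · obtain ⟨e, he, hee⟩ := hclass2 q p hpq.symm h1 h2
        exact ⟨e, he, hee.trans Sym2.eq_swap⟩
    · rintro ⟨e, ⟨heE, heR⟩, rfl⟩
      obtain ⟨y, z, rfl⟩ := sym2_rep' e
      rw [Sym2.map_pair_eq, SimpleGraph.mem_edgeSet]
      have hadj := (SimpleGraph.mem_edgeSet G).mp heE
      apply adjσ y z hadj
      · rintro ⟨rfl, rfl⟩
        apply heR
        rw [hR]
        exact Set.mem_insert _ _
      · rintro ⟨rfl, rfl⟩
        apply heR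
        rw [hR]
        exact Set.mem_insert_iff.mpr (Or.inl Sym2.eq_swap)
  have hcore34 : ∀ p r : V, s(u 3, p) ∈ G.edgeSet \ R → s(u 4, r) ∈ G.edgeSet \ R →
      σ p = σ r → False := by
    intro p r h1 h2 hσ'
    rcases (σeq p r).mp hσ' with rfl | ⟨hp, hr⟩ | ⟨hp, hr⟩
    · have hadj := (SimpleGraph.mem_edgeSet G).mp h1.1
      rcases (hN3 p).mp hadj with rfl | rfl | rfl | rfl
      · have := (SimpleGraph.mem_edgeSet G).mp h2.1
        have h24 := (hN4 (u 2)).mp this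
        simp [hd 2 3 (by decide), hd 2 5 (by decide), Ne.symm (hv 2), Ne.symm (hx 2)] at h24
      · apply h1.2
        rw [hR]
        exact Set.mem_insert _ _
      · apply h2.2
        rw [hR]
        exact Set.mem_insert_iff.mpr (Or.inr (Set.mem_insert _ _))
      · apply h2.2
        rw [hR]
        exact Set.mem_insert_iff.mpr (Or.inr (Set.mem_insert_iff.mpr (Or.inr rfl)))
    · subst hp
      exact (G.loopless.irrefl _) ((SimpleGraph.mem_edgeSet G).mp h1.1)
    · subst hp
      apply h1.2
      rw [hR]
      exact Set.mem_insert _ _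
  have hEinj : Set.InjOn (Sym2.map σ) (G.edgeSet \ R) := by
    have hkey : ∀ a b c d : V, s(a, b) ∈ G.edgeSet \ R → s(c, d) ∈ G.edgeSet \ R →
        σ a = σ c → σ b = σ d → s(a, b) = s(c, d) := by
      intro a b c d h1 h2 hac hbd
      rcases (σeq a c).mp hac with rfl | ⟨ha3, hc4⟩ | ⟨ha4, hc3⟩
      · rcases (σeq b d).mp hbd with rfl | ⟨hb3, hd4⟩ | ⟨hb4, hd3⟩
        · rfl
        · subst hb3; subst hd4
          have h1' : s(u 3, a) ∈ G.edgeSet \ R := by rwa [Sym2.eq_swap] at h1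
          have h2' : s(u 4, a) ∈ G.edgeSet \ R := by rwa [Sym2.eq_swap] at h2
          exact (hcore34 a a h1' h2' rfl).elim
        · subst hb4; subst hd3
          have h1' : s(u 4, a) ∈ G.edgeSet \ R := by rwa [Sym2.eq_swap] at h1
          have h2' : s(u 3, a) ∈ G.edgeSet \ R := by rwa [Sym2.eq_swap] at h2
          exact (hcore34 a a h2' h1' rfl).elim
      · subst ha3; subst hc4
        exact (hcore34 b d h1 h2 hbd).elim
      · subst ha4; subst hc3
        exact (hcore34 d b h2 h1 hbd.symm).elim
    intro e1 he1 e2 he2 h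
    obtain ⟨a, b, rfl⟩ := sym2_rep' e1
    obtain ⟨c, d, rfl⟩ := sym2_rep' e2
    rw [Sym2.map_pair_eq, Sym2.map_pair_eq, Sym2.eq_iff] at h
    rcases h with ⟨h1, h2⟩ | ⟨h1, h2⟩
    · exact hkey a b c d he1 he2 h1 h2
    · have he2' : s(d, c) ∈ G.edgeSet \ R := by rwa [Sym2.eq_swap] at he2
      exact (hkey a b d c he1 he2' h1 h2).trans Sym2.eq_swap
  have hRcard : R.ncard = 3 := by
    rw [hR]
    rw [Set.ncard_insert_of_notMem (by
        simp [Sym2.eq_iff, hd 3 4 (by decide), Ne.symm (hv 3), Ne.symm (hv 4),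
          Ne.symm (hx 3), Ne.symm (hx 4), hd 4 3 (by decide)]) (Set.toFinite _),
      Set.ncard_insert_of_notMem (by
        simp [Sym2.eq_iff, hvx, Ne.symm (hx 4), Ne.symm (hv 4)]) (Set.toFinite _),
      Set.ncard_singleton]
  have hE3 : 3 ≤ G.edgeSet.ncard := by
    rw [← hRcard]
    exact Set.ncard_le_ncard hRE (Set.toFinite _)
  have hEcard : G'.edgeSet.ncard = G.edgeSet.ncard - 3 := by
    rw [hEs, Set.ncard_image_of_injOn hEinj, Set.ncard_diff hRE (Set.toFinite _), hRcard]
  have hFsub : ({Fv, Fx} : Set (Finset (Sym2 V))) ⊆ PT.faces := by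
    rintro f (rfl | rfl)
    · exact hFvF
    · exact hFxF
  have hF2 : 2 ≤ PT.faces.ncard := by
    rw [← Set.ncard_pair hFvx_ne]
    exact Set.ncard_le_ncard hFsub (Set.toFinite _)
  have hFcard : Fs.ncard = PT.faces.ncard - 2 := by
    rw [hFs, Set.ncard_image_of_injOn hinjFM, Set.ncard_diff hFsub (Set.toFinite _),
      Set.ncard_pair hFvx_ne]
  have hcardV' : Fintype.card {a : V // a ≠ u 4} = n - 1 := by
    have h1 : Fintype.card {a : V // ¬(a = u 4)} =
        Fintype.card V - Fintype.card {a : V // a = u 4} :=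
      Fintype.card_subtype_compl _
    rw [Fintype.card_subtype_eq, hn] at h1
    exact h1
  -- ===== connectivity =====
  have hGc' : G'.Connected := by
    apply conn_map' σ ?_ ?_ PT.connected
    · intro p
      exact ⟨p.val, (σ_ne p.val p.prop).trans (by rfl)⟩
    · intro a b hab
      by_cases h1 : a = u 3 ∧ b = u 4
      · right; rw [h1.1, h1.2, σ3, σ4]
      · by_cases h2 : a = u 4 ∧ b = u 3
        · right; rw [h2.1, h2.2, σ3, σ4]
        · exact Or.inl (adjσ a b hab h1 h2)
  have hconn4 : ∀ s : Set {a : V // a ≠ u 4}, s.ncard ≤ 3 → (G'.induce sᶜ).Connected := by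
    intro s hs
    by_cases hws : (⟨u 3, h34ne⟩ : {a : V // a ≠ u 4}) ∈ s
    · -- the contracted vertex was deleted
      set T : Set V := Subtype.val '' (s \ {⟨u 3, h34ne⟩}) with hT
      have hTn : T.ncard ≤ 2 := by
        rw [hT, Set.ncard_image_of_injective _ Subtype.val_injective,
          Set.ncard_diff_singleton_of_mem hws]
        omega
      have hu3T : u 3 ∉ T := by
        rintro ⟨q, hq, hqv⟩
        exact hq.2 (Subtype.ext hqv)
      have hu4T : u 4 ∉ T := by
        rintro ⟨q, hq, hqv⟩
        exact q.prop hqv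
      have hbase : (G.induce (insert (u 3) T)ᶜ).Connected := by
        apply h4.2
        calc (insert (u 3) T).ncard ≤ T.ncard + 1 := Set.ncard_insert_le _ _
          _ ≤ 3 := by omega
      have hW : ∀ y : V, y ≠ u 4 → y ≠ u 3 → y ∉ T →
          y ∈ (insert (u 4) (insert (u 3) T))ᶜ := by
        intro y hy4 hy3 hyT hm
        rcases Set.mem_insert_iff.mp hm with h | hm
        · exact hy4 h
        rcases Set.mem_insert_iff.mp hm with h | hm
        · exact hy3 h
        · exact hyT hm
      have hmu3 : u 3 ∈ insert (u 4) (insert (u 3) T) :=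
        Set.mem_insert_iff.mpr (Or.inr (Set.mem_insert _ _))
      have hmT : ∀ y, y ∈ T → y ∈ insert (u 4) (insert (u 3) T) :=
        fun y hy => Set.mem_insert_iff.mpr (Or.inr (Set.mem_insert_iff.mpr (Or.inr hy)))
      have hstep : ∀ (y1 y2 : V) (h1 : y1 ∈ (insert (u 4) (insert (u 3) T))ᶜ)
          (h2 : y2 ∈ (insert (u 4) (insert (u 3) T))ᶜ), G.Adj y1 y2 →
          (G.induce (insert (u 4) (insert (u 3) T))ᶜ).Reachable ⟨y1, h1⟩ ⟨y2, h2⟩ :=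
        fun y1 y2 h1 h2 h => ((ind_adj _ ⟨y1, h1⟩ ⟨y2, h2⟩).mpr h).reachable
      obtain ⟨z, hz, hnbr⟩ : ∃ z, ∃ hz : z ∈ (insert (u 4) (insert (u 3) T))ᶜ,
          ∀ y (hy : y ∈ (insert (u 4) (insert (u 3) T))ᶜ), G.Adj (u 4) y →
            (G.induce (insert (u 4) (insert (u 3) T))ᶜ).Reachable ⟨y, hy⟩ ⟨z, hz⟩ := by
        by_cases hvT : v ∈ T <;> by_cases hxT : x ∈ T
        · -- both v and x deleted : T = {v, x}
          have hTvx : ({v, x} : Set V) = T := by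
            apply Set.eq_of_subset_of_ncard_le
            · intro z hz
              rcases hz with rfl | hz
              · exact hvT
              · rw [Set.mem_singleton_iff] at hz
                subst hz
                exact hxT
            · rw [Set.ncard_pair hvx]
              exact hTn
            · exact Set.toFinite _
          have h5T : u 5 ∉ T := by
            rw [← hTvx]
            intro h
            rcases h with h | h
            · exact (hv 5) h.symm
            · rw [Set.mem_singleton_iff] at h
              exact (hx 5) h.symm
          refine ⟨u 5, hW _ (hd 5 4 (by decide)) (hd 5 3 (by decide)) h5T, ?_⟩
          intro y hy hadj
          rcases (hN4 y).mp hadj with h | h | h | h <;> subst y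
          · exact absurd hmu3 hy
          · exact SimpleGraph.Reachable.refl _
          · exact absurd (hmT v hvT) hy
          · exact absurd (hmT x hxT) hy
        · -- v deleted, x not
          refine ⟨x, hW x (hx 4) (hx 3) hxT, ?_⟩
          intro y hy hadj
          rcases (hN4 y).mp hadj with h | h | h | h <;> subst y
          · exact absurd hmu3 hy
          · exact hstep _ _ hy _ (ax 5 (by decide) (by decide))
          · exact absurd (hmT v hvT) hy
          · exact SimpleGraph.Reachable.refl _
        · -- x deleted, v not
          refine ⟨v, hW v (hv 4) (hv 3) hvT, ?_⟩
          intro y hy hadj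
          rcases (hN4 y).mp hadj with h | h | h | h <;> subst y
          · exact absurd hmu3 hy
          · exact hstep _ _ hy _ (av 5 (by decide) (by decide)).symm
          · exact SimpleGraph.Reachable.refl _
          · exact absurd (hmT x hxT) hy
        · -- neither deleted
          obtain ⟨m, hmv, hmx, hmT', hm3, hm4⟩ : ∃ m : V, G.Adj v m ∧ G.Adj m x ∧
              m ∉ T ∧ m ≠ u 3 ∧ m ≠ u 4 := by
            by_cases h1T : u 1 ∈ T
            · by_cases h2T : u 2 ∈ T
              · have hT12 : ({u 1, u 2} : Set V) = T := by
                  apply Set.eq_of_subset_of_ncard_le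
                  · intro z hz
                    rcases hz with rfl | hz
                    · exact h1T
                    · rw [Set.mem_singleton_iff] at hz
                      subst hz
                      exact h2T
                  · rw [Set.ncard_pair (hd 1 2 (by decide))]
                    exact hTn
                  · exact Set.toFinite _
                refine ⟨u 6, av 6 (by decide) (by decide), ax 6 (by decide) (by decide), ?_,
                  hd 6 3 (by decide), hd 6 4 (by decide)⟩
                rw [← hT12]
                intro h
                rcases h with h | h
                · exact hd 6 1 (by decide) h
                · rw [Set.mem_singleton_iff] at h
                  exact hd 6 2 (by decide) h
              · exact ⟨u 2, av 2 (by decide) (by decide), ax 2 (by decide) (by decide), h2T,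
                  hd 2 3 (by decide), hd 2 4 (by decide)⟩
            · exact ⟨u 1, av 1 (by decide) (by decide), ax 1 (by decide) (by decide), h1T,
                hd 1 3 (by decide), hd 1 4 (by decide)⟩
          refine ⟨x, hW x (hx 4) (hx 3) hxT, ?_⟩
          intro y hy hadj
          rcases (hN4 y).mp hadj with h | h | h | h <;> subst y
          · exact absurd hmu3 hy
          · exact hstep _ _ hy _ (ax 5 (by decide) (by decide))
          · exact (hstep _ _ hy (hW m hm4 hm3 hmT') hmv).trans
              (hstep _ _ _ (hW x (hx 4) (hx 3) hxT) hmx)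
          · exact SimpleGraph.Reachable.refl _
      have hdel := del_connected' G (insert (u 3) T) hbase (u 4) z hz hnbr
      have hmem1 : ∀ a : V, a ∈ (insert (u 4) (insert (u 3) T))ᶜ → a ≠ u 4 :=
        fun a ha h => ha (h ▸ Set.mem_insert _ _)
      have hmem2 : ∀ (a : V) (ha : a ∈ (insert (u 4) (insert (u 3) T))ᶜ),
          (⟨a, hmem1 a ha⟩ : {a : V // a ≠ u 4}) ∉ s := by
        intro a ha hmem
        by_cases h3 : a = u 3
        · exact ha (h3 ▸ hmu3)
        · refine ha (hmT a ?_)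
          rw [hT]
          refine ⟨⟨a, hmem1 a ha⟩, ⟨hmem, ?_⟩, rfl⟩
          intro hq
          exact h3 (congrArg Subtype.val hq)
      apply conn_map' (fun a : ↥(insert (u 4) (insert (u 3) T))ᶜ =>
          (⟨⟨a.val, hmem1 a.val a.prop⟩, hmem2 a.val a.prop⟩ : ↥sᶜ)) ?_ ?_ hdel
      · rintro ⟨⟨pv, hpv⟩, hps⟩
        have h3 : pv ≠ u 3 := by
          intro h
          exact hps (show (⟨pv, hpv⟩ : {a : V // a ≠ u 4}) ∈ s from by
            rw [show (⟨pv, hpv⟩ : {a : V // a ≠ u 4}) = ⟨u 3, h34ne⟩ from Subtype.ext h]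
            exact hws)
        have hT' : pv ∉ T := by
          rintro ⟨q, hq, hqv⟩
          exact hps (show (⟨pv, hpv⟩ : {a : V // a ≠ u 4}) ∈ s from by
            rw [show (⟨pv, hpv⟩ : {a : V // a ≠ u 4}) = q from (Subtype.ext hqv).symm]
            exact hq.1)
        exact ⟨⟨pv, hW pv hpv h3 hT'⟩, Subtype.ext (Subtype.ext rfl)⟩
      · intro a b hab
        left
        have h := (ind_adj _ a b).mp hab
        have ha3 : a.val ≠ u 3 := fun hh => a.prop (by rw [hh]; exact hmu3)
        have hb3 : b.val ≠ u 3 := fun hh => b.prop (by rw [hh]; exact hmu3)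
        have hadj2 := adjσ a.val b.val h (fun hh => ha3 hh.1) (fun hh => hb3 hh.2)
        apply (ind_adj' _ _ _).mpr
        rw [σ_ne a.val (hmem1 _ a.prop), σ_ne b.val (hmem1 _ b.prop)] at hadj2
        exact hadj2
    · -- the contracted vertex survives
      set s' : Set V := Subtype.val '' s with hs'
      have hs'n : s'.ncard ≤ 3 := by
        rw [hs', Set.ncard_image_of_injective _ Subtype.val_injective]
        exact hs
      have hbase := h4.2 s' hs'n
      have hmemσ : ∀ a : V, a ∈ s'ᶜ → σ a ∉ s := by
        intro a ha hmem
        by_cases h4a : a = u 4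
        · rw [h4a, σ4] at hmem
          exact hws hmem
        · rw [σ_ne a h4a] at hmem
          exact ha ⟨⟨a, h4a⟩, hmem, rfl⟩
      apply conn_map' (fun a : ↥s'ᶜ => (⟨σ a.val, hmemσ a.val a.prop⟩ : ↥sᶜ)) ?_ ?_ hbase
      · rintro ⟨p, hp⟩
        by_cases hp3 : p = (⟨u 3, h34ne⟩ : {a : V // a ≠ u 4})
        · have hm : u 4 ∈ s'ᶜ := by
            rintro ⟨q, hq, hqv⟩
            exact q.prop hqv
          refine ⟨⟨u 4, hm⟩, Subtype.ext ?_⟩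
          show σ (u 4) = p
          rw [σ4, hp3]
        · have hm : p.val ∈ s'ᶜ := by
            rintro ⟨q, hq, hqv⟩
            rw [show q = p from Subtype.ext hqv] at hq
            exact hp hq
          refine ⟨⟨p.val, hm⟩, Subtype.ext ?_⟩
          show σ p.val = p
          rw [σ_ne p.val p.prop]
      · intro a b hab
        have h := (ind_adj _ a b).mp hab
        by_cases hp1 : a.val = u 3 ∧ b.val = u 4
        · right
          apply Subtype.ext
          show σ a.val = σ b.val
          rw [hp1.1, hp1.2, σ3, σ4]
        · by_cases hp2 : a.val = u 4 ∧ b.val = u 3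
          · right
            apply Subtype.ext
            show σ a.val = σ b.val
            rw [hp2.1, hp2.2, σ3, σ4]
          · left
            exact (ind_adj' _ _ _).mpr (adjσ a.val b.val h hp1 hp2)
  -- ===== assembly =====
  refine ⟨⟨⟨hGc', Fs, hftri, hcount, ?_⟩⟩, ⟨?_, hconn4⟩, hcardV'⟩
  · -- Euler formula
    have heu := PT.euler
    rw [hn] at heu
    rw [hcardV', hEcard, hFcard]
    omega
  · rw [hcardV']
    omega
end
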